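/- arXiv:1302.6004 — 5 statements merged into one kernel-verified Lean document; each statement's English description precedes it below -/
import Mathlib

section
/- Let μ ∈ ℝ, ς > 0 and t > 1 be fixed, and let X be a real Gaussian random variable with mean μ and variance ς². Then Prob{|X| > t·|X + 1|} < ((|μ| + ς)/ς)·(1/(t − 1))·√(2/π). -/
open MeasureTheory ProbabilityTheory

set_option maxHeartbeats 1000000 in
/-- If `X ~ N(μ, ς²)` with `ς > 0` and `t > 1`, then
`Prob{|X| > t·|X + 1|} < ((|μ| + ς)/ς)·(1/(t − 1))·√(2/π)`. -/
theorem prob_abs_gt (μ : ℝ) (ς : ℝ) (hς : 0 < ς) (t : ℝ) (ht : 1 < t) :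
    gaussianReal μ ⟨ς ^ 2, sq_nonneg ς⟩ {x | t * |x + 1| < |x|}
      < ENNReal.ofReal ((|μ| + ς) / ς * (1 / (t - 1)) * Real.sqrt (2 / Real.pi)) := by
  set v : NNReal := ⟨ς ^ 2, sq_nonneg ς⟩ with hv_def
  have hv : v ≠ 0 := by
    simp only [hv_def, ne_eq, ← NNReal.coe_eq_zero, NNReal.coe_mk]
    exact fun h => pow_ne_zero 2 hς.ne' (congrArg NNReal.toReal h)
  have ht0 : (0 : ℝ) < t - 1 := by linarith
  have ht1 : (0 : ℝ) < t + 1 := by linarith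
  have htpos : (0 : ℝ) < t := by linarith
  set a : ℝ := -t / (t - 1) with ha_def
  set b : ℝ := -t / (t + 1) with hb_def
  have hsub : {x : ℝ | t * |x + 1| < |x|} ⊆ Set.Ioo a b := by
    intro x hx
    simp only [Set.mem_setOf_eq] at hx
    have hx0 : x < 0 := by
      by_contra h
      push_neg at h
      rw [abs_of_nonneg h, abs_of_nonneg (by linarith)] at hx
      nlinarith
    rw [abs_of_neg hx0] at hx
    rcases le_or_gt 0 (x + 1) with h1 | h1
    · rw [abs_of_nonneg h1] at hx
      constructor
      · have : a < -1 := by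
          rw [div_lt_iff₀ ht0]; ring_nf; nlinarith
        linarith
      · rw [lt_div_iff₀ ht1]; nlinarith
    · rw [abs_of_neg h1] at hx
      constructor
      · rw [div_lt_iff₀ ht0]; nlinarith
      · have : (-1 : ℝ) < b := by
          rw [lt_div_iff₀ ht1]; nlinarith
        linarith
  have hπ : (0 : ℝ) < Real.pi := Real.pi_pos
  have hvς : ((v : ℝ)) = ς ^ 2 := rfl
  -- key pointwise estimate: s * exp (-s²/(2ς²)) ≤ ς * exp (-(1/2)) for s ≥ 0
  have key : ∀ s : ℝ, 0 ≤ s →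
      s * Real.exp (-s ^ 2 / (2 * ς ^ 2)) ≤ ς * Real.exp (-(1 / 2)) := by
    intro s hs
    have hE : (0 : ℝ) < Real.exp (s ^ 2 / (2 * ς ^ 2)) := Real.exp_pos _
    have h1 : (s ^ 2 - ς ^ 2) / (2 * ς ^ 2) + 1 ≤
        Real.exp ((s ^ 2 - ς ^ 2) / (2 * ς ^ 2)) := Real.add_one_le_exp _
    have h2 : Real.exp (-(1 / 2)) * Real.exp (s ^ 2 / (2 * ς ^ 2)) =
        Real.exp ((s ^ 2 - ς ^ 2) / (2 * ς ^ 2)) := by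
      rw [← Real.exp_add]
      congr 1
      field_simp
      ring
    have h3 : s ≤ ς * (Real.exp (-(1 / 2)) * Real.exp (s ^ 2 / (2 * ς ^ 2))) := by
      rw [h2]
      have h5' := mul_le_mul_of_nonneg_left h1 hς.le
      have h4 : ς * ((s ^ 2 - ς ^ 2) / (2 * ς ^ 2) + 1) = (s ^ 2 + ς ^ 2) / (2 * ς) := by
        field_simp; ring
      have hAM : s ≤ (s ^ 2 + ς ^ 2) / (2 * ς) := by
        rw [le_div_iff₀ (by positivity)]; nlinarith [sq_nonneg (s - ς)]
      rw [h4] at h5'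
      linarith
    have h5 : Real.exp (-s ^ 2 / (2 * ς ^ 2)) =
        (Real.exp (s ^ 2 / (2 * ς ^ 2)))⁻¹ := by
      rw [← Real.exp_neg]; ring_nf
    rw [h5, mul_inv_le_iff₀ hE]
    linarith
  -- pointwise pdf bound on the interval
  set D : ℝ := |μ| + ς * Real.exp (-(1 / 2)) with hD_def
  have hDpos : 0 < D := by
    rw [hD_def]
    positivity
  set C : ℝ := (Real.sqrt (2 * Real.pi * v))⁻¹ * (D * (t + 1) / t) with hC_def
  have hvpos : (0 : ℝ) < (v : ℝ) := by rw [hvς]; positivity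
  have hCpos : 0 < C := by
    rw [hC_def]
    have : (0:ℝ) < Real.sqrt (2 * Real.pi * v) := Real.sqrt_pos.mpr (by positivity)
    positivity
  have hbound : ∀ x ∈ Set.Ioo a b, gaussianPDF μ v x ≤ ENNReal.ofReal C := by
    intro x hx
    rw [gaussianPDF]
    apply ENNReal.ofReal_le_ofReal
    rw [gaussianPDFReal]
    have hxb : x < b := hx.2
    have hbneg : b < 0 := div_neg_of_neg_of_pos (by linarith) ht1
    have hxneg : x < 0 := lt_trans hxb hbneg
    have hxabs : t / (t + 1) ≤ |x| := by
      rw [abs_of_neg hxneg]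
      have : t / (t + 1) = -b := by rw [hb_def]; ring
      linarith [this ▸ neg_lt_neg hxb]
    have hxabs' : 0 < |x| := lt_of_lt_of_le (by positivity) hxabs
    -- |x| * exp(-(x-μ)²/(2ς²)) ≤ D
    have hker : |x| * Real.exp (-(x - μ) ^ 2 / (2 * ς ^ 2)) ≤ D := by
      have h6 : |x| ≤ |μ| + |x - μ| := by
        calc |x| = |μ + (x - μ)| := by ring_nf
          _ ≤ |μ| + |x - μ| := abs_add_le _ _
      have h7 : |x - μ| * Real.exp (-|x - μ| ^ 2 / (2 * ς ^ 2)) ≤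
          ς * Real.exp (-(1 / 2)) := key _ (abs_nonneg _)
      have h8 : |x - μ| ^ 2 = (x - μ) ^ 2 := sq_abs _
      rw [h8] at h7
      have h9 : Real.exp (-(x - μ) ^ 2 / (2 * ς ^ 2)) ≤ 1 := by
        apply Real.exp_le_one_iff.mpr
        apply div_nonpos_of_nonpos_of_nonneg
        · nlinarith [sq_nonneg (x - μ)]
        · positivity
      have h10 : 0 < Real.exp (-(x - μ) ^ 2 / (2 * ς ^ 2)) := Real.exp_pos _
      rw [hD_def]
      nlinarith [abs_nonneg μ]
    -- conclude
    have hE : Real.exp (-(x - μ) ^ 2 / (2 * ↑v)) ≤ D / |x| := by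
      rw [le_div_iff₀ hxabs', hvς]
      calc Real.exp (-(x - μ) ^ 2 / (2 * ς ^ 2)) * |x|
          = |x| * Real.exp (-(x - μ) ^ 2 / (2 * ς ^ 2)) := by ring
        _ ≤ D := hker
    have hDx : D / |x| ≤ D * (t + 1) / t := by
      rw [div_le_div_iff₀ hxabs' htpos]
      calc D * t = D * (t / (t + 1) * (t + 1)) := by field_simp
        _ ≤ D * (|x| * (t + 1)) := by
            apply mul_le_mul_of_nonneg_left _ hDpos.le
            exact mul_le_mul_of_nonneg_right hxabs ht1.le
        _ = D * (t + 1) * |x| := by ring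
    rw [hC_def]
    have hs : (0:ℝ) < Real.sqrt (2 * Real.pi * v) := Real.sqrt_pos.mpr (by positivity)
    have := le_trans hE hDx
    exact mul_le_mul_of_nonneg_left this (by positivity)
  calc gaussianReal μ v {x | t * |x + 1| < |x|}
      ≤ gaussianReal μ v (Set.Ioo a b) := measure_mono hsub
    _ = ∫⁻ x in Set.Ioo a b, gaussianPDF μ v x := gaussianReal_apply μ hv _
    _ ≤ ∫⁻ _ in Set.Ioo a b, ENNReal.ofReal C :=
        setLIntegral_mono measurable_const hbound
    _ = ENNReal.ofReal C * volume (Set.Ioo a b) := by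
        rw [setLIntegral_const]
    _ = ENNReal.ofReal (C * (b - a)) := by
        rw [Real.volume_Ioo, ← ENNReal.ofReal_mul hCpos.le]
    _ < ENNReal.ofReal ((|μ| + ς) / ς * (1 / (t - 1)) * Real.sqrt (2 / Real.pi)) := by
        have hsp : (0:ℝ) < Real.sqrt Real.pi := Real.sqrt_pos.mpr hπ
        have hs2 : (0:ℝ) < Real.sqrt 2 := Real.sqrt_pos.mpr (by norm_num)
        have h2 : Real.sqrt 2 ^ 2 = 2 := Real.sq_sqrt (by norm_num)
        have hp2 : Real.sqrt Real.pi ^ 2 = Real.pi := Real.sq_sqrt hπ.le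
        have hsq2 : Real.sqrt (2 / Real.pi) = Real.sqrt 2 / Real.sqrt Real.pi :=
          Real.sqrt_div (by norm_num) _
        have hRpos : 0 < (|μ| + ς) / ς * (1 / (t - 1)) * Real.sqrt (2 / Real.pi) := by
          have hμ : 0 ≤ |μ| := abs_nonneg μ
          rw [hsq2]; positivity
        rw [ENNReal.ofReal_lt_ofReal_iff hRpos]
        have hsq : Real.sqrt (2 * Real.pi * (v:ℝ)) = Real.sqrt 2 * Real.sqrt Real.pi * ς := by
          rw [show (2 * Real.pi * (v:ℝ)) = (Real.sqrt 2 * Real.sqrt Real.pi * ς) ^ 2 by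
            rw [hvς, mul_pow, mul_pow, h2, hp2]]
          exact Real.sqrt_sq (by positivity)
        rw [hC_def, hsq, hsq2]
        have hμ : 0 ≤ |μ| := abs_nonneg μ
        have hba : b - a = 2 * t / ((t - 1) * (t + 1)) := by
          rw [ha_def, hb_def]; field_simp; ring
        rw [hba]
        have hexp : Real.exp (-(1 / 2 : ℝ)) < 1 := by
          apply Real.exp_lt_one_iff.mpr; norm_num
        have hexp0 : (0:ℝ) < Real.exp (-(1 / 2 : ℝ)) := Real.exp_pos _
        -- clear denominators
        have hD' : D < |μ| + ς := by rw [hD_def]; nlinarith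
        have hs2' : Real.sqrt 2 ≠ 0 := hs2.ne'
        have hsp' : Real.sqrt Real.pi ≠ 0 := hsp.ne'
        field_simp
        rw [h2]; linarith
end

section
/- Let k, H > 0 and let X be a random variable with X > 1 almost surely such that Prob{X > t} ≤ k/(t − H) for all t > k + H. Then for every β > 1 one has E(log_β X) < log_β(k + H) + 1/ln β. -/
open MeasureTheory ProbabilityTheory

/-- If `X > 1` a.s. and `Prob{X > t} ≤ k/(t − H)` for all `t > k + H`
(`k, H > 0`), then for every `β > 1`, `E(log_β X) < log_β(k + H) + 1/ln β`. -/
theorem expectation_logb_lt {Ω : Type*} [MeasureSpace Ω]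
    [IsProbabilityMeasure (ℙ : Measure Ω)] (X : Ω → ℝ) (hX : Measurable X)
    (k H : ℝ) (hk : 0 < k) (hH : 0 < H)
    (hone : ∀ᵐ ω, 1 < X ω)
    (htail : ∀ t : ℝ, k + H < t → ((ℙ : Measure Ω) {ω | t < X ω}).toReal ≤ k / (t - H))
    (β : ℝ) (hβ : 1 < β) :
    ∫ ω, Real.log (X ω) / Real.log β
      < Real.log (k + H) / Real.log β + 1 / Real.log β := by
  have hβ' : 0 < Real.log β := Real.log_pos hβ
  set M : ℝ := k + H with hMdef
  have hMpos : 0 < M := by positivity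
  -- Step 0 : M ≥ 1
  have hM1 : 1 ≤ M := by
    by_contra hlt
    push_neg at hlt
    set t : ℝ := (M + 1) / 2 with ht
    have h1 : M < t := by rw [ht]; linarith
    have h2 : t < 1 := by rw [ht]; linarith
    have hcomp : (ℙ : Measure Ω) {ω | t < X ω}ᶜ = 0 := by
      rw [Set.compl_setOf, ← MeasureTheory.ae_iff]
      filter_upwards [hone] with ω hω
      linarith
    have hfull : ((ℙ : Measure Ω) {ω | t < X ω}).toReal = 1 := by
      rw [measure_congr (MeasureTheory.ae_eq_univ.2 hcomp), measure_univ]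
      simp
    have hle := htail t h1
    rw [hfull] at hle
    have hlt2 : k / (t - H) < 1 := by
      rw [div_lt_one (by linarith)]
      linarith
    linarith
  -- Basic nonnegativity / measurability
  have hnn : 0 ≤ᵐ[(ℙ : Measure Ω)] fun ω => Real.log (X ω) := by
    filter_upwards [hone] with ω hω
    exact Real.log_nonneg hω.le
  have hmble : Measurable fun ω => Real.log (X ω) := Real.measurable_log.comp hX
  -- layer cake
  have key := lintegral_eq_lintegral_meas_lt (ℙ : Measure Ω) hnn hmble.aemeasurable
  set a : ℝ := Real.log M with hadef
  set b : ℝ := Real.log (2 * M) with hbdef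
  set c : ℝ := 2 * k * M / (2 * k + H) with hcdef
  have ha0 : 0 ≤ a := Real.log_nonneg hM1
  have hab : a < b := Real.log_lt_log hMpos (by linarith)
  have hea : Real.exp a = M := Real.exp_log hMpos
  have heb : Real.exp b = 2 * M := Real.exp_log (by linarith)
  -- set comparison
  have hmeas_eq : ∀ t : ℝ, (ℙ : Measure Ω) {ω | t < Real.log (X ω)}
      = (ℙ : Measure Ω) {ω | Real.exp t < X ω} := by
    intro t
    apply measure_congr
    filter_upwards [hone] with ω hω
    simp only [Set.mem_setOf_eq, eq_iff_iff]
    exact Real.lt_log_iff_exp_lt (by linarith)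
  have htail' : ∀ t : ℝ, a < t → (ℙ : Measure Ω) {ω | t < Real.log (X ω)}
      ≤ ENNReal.ofReal (k / (Real.exp t - H)) := by
    intro t hta
    have hMe : M < Real.exp t := by
      calc M = Real.exp a := hea.symm
        _ < Real.exp t := Real.exp_lt_exp.2 hta
    rw [hmeas_eq t]
    have := htail (Real.exp t) hMe
    calc (ℙ : Measure Ω) {ω | Real.exp t < X ω}
        = ENNReal.ofReal (((ℙ : Measure Ω) {ω | Real.exp t < X ω}).toReal) :=
          (ENNReal.ofReal_toReal (measure_ne_top _ _)).symm
      _ ≤ ENNReal.ofReal (k / (Real.exp t - H)) := ENNReal.ofReal_le_ofReal this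
  -- split the integral
  have hsplit : ∫⁻ t in Set.Ioi (0:ℝ), (ℙ : Measure Ω) {ω | t < Real.log (X ω)}
      = (∫⁻ t in Set.Ioc (0:ℝ) a, (ℙ : Measure Ω) {ω | t < Real.log (X ω)})
        + ((∫⁻ t in Set.Ioc a b, (ℙ : Measure Ω) {ω | t < Real.log (X ω)})
        + (∫⁻ t in Set.Ioi b, (ℙ : Measure Ω) {ω | t < Real.log (X ω)})) := by
    rw [← lintegral_union measurableSet_Ioi Set.Ioc_disjoint_Ioi_same,
      Set.Ioc_union_Ioi_eq_Ioi hab.le,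
      ← lintegral_union measurableSet_Ioi Set.Ioc_disjoint_Ioi_same,
      Set.Ioc_union_Ioi_eq_Ioi ha0]
  -- piece 1
  have hp1 : (∫⁻ t in Set.Ioc (0:ℝ) a, (ℙ : Measure Ω) {ω | t < Real.log (X ω)})
      ≤ ENNReal.ofReal a := by
    calc (∫⁻ t in Set.Ioc (0:ℝ) a, (ℙ : Measure Ω) {ω | t < Real.log (X ω)})
        ≤ ∫⁻ _t in Set.Ioc (0:ℝ) a, 1 :=
          setLIntegral_mono measurable_const fun t _ => prob_le_one
      _ = ENNReal.ofReal a := by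
          rw [setLIntegral_const, one_mul, Real.volume_Ioc, sub_zero]
  -- piece 2
  have hp2 : (∫⁻ t in Set.Ioc a b, (ℙ : Measure Ω) {ω | t < Real.log (X ω)})
      ≤ ENNReal.ofReal (1 / 2) := by
    have hbound : ∀ t ∈ Set.Ioc a b, (ℙ : Measure Ω) {ω | t < Real.log (X ω)}
        ≤ ENNReal.ofReal (M * Real.exp (-t)) := by
      intro t ht
      refine (htail' t ht.1).trans (ENNReal.ofReal_le_ofReal ?_)
      have hMe : M < Real.exp t := by
        calc M = Real.exp a := hea.symm
          _ < Real.exp t := Real.exp_lt_exp.2 ht.1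
      have hpos : 0 < Real.exp t - H := by linarith
      rw [Real.exp_neg, mul_comm M, ← div_eq_inv_mul, div_le_div_iff₀ hpos (Real.exp_pos t)]
      nlinarith [Real.exp_pos t]
    calc (∫⁻ t in Set.Ioc a b, (ℙ : Measure Ω) {ω | t < Real.log (X ω)})
        ≤ ∫⁻ t in Set.Ioc a b, ENNReal.ofReal (M * Real.exp (-t)) :=
          setLIntegral_mono (by fun_prop) hbound
      _ = ENNReal.ofReal (∫ t in Set.Ioc a b, M * Real.exp (-t)) := by
          rw [ofReal_integral_eq_lintegral_ofReal]
          · exact (Continuous.integrableOn_Ioc (by fun_prop))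
          · filter_upwards with t
            positivity
      _ = ENNReal.ofReal (1 / 2) := by
          congr 1
          rw [← intervalIntegral.integral_of_le hab.le]
          have : ∫ t in a..b, M * Real.exp (-t)
              = M * ∫ t in a..b, Real.exp (-t) := intervalIntegral.integral_const_mul _ _
          have h2 : ∫ t in a..b, Real.exp (-t) = Real.exp (-a) - Real.exp (-b) := by
            rw [intervalIntegral.integral_comp_neg (fun t => Real.exp t), integral_exp]
          rw [this, h2, Real.exp_neg, Real.exp_neg, hea, heb]
          field_simp
          ring
  -- piece 3
  have hc0 : 0 ≤ c := by positivity
  have hp3 : (∫⁻ t in Set.Ioi b, (ℙ : Measure Ω) {ω | t < Real.log (X ω)})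
      ≤ ENNReal.ofReal (k / (2 * k + H)) := by
    have hbound : ∀ t ∈ Set.Ioi b, (ℙ : Measure Ω) {ω | t < Real.log (X ω)}
        ≤ ENNReal.ofReal (c * Real.exp (-t)) := by
      intro t ht
      simp only [Set.mem_Ioi] at ht
      refine (htail' t (hab.trans ht)).trans (ENNReal.ofReal_le_ofReal ?_)
      have h2Me : 2 * M < Real.exp t := by
        calc 2 * M = Real.exp b := heb.symm
          _ < Real.exp t := Real.exp_lt_exp.2 ht
      have hpos : 0 < Real.exp t - H := by linarith
      rw [Real.exp_neg, mul_comm c, ← div_eq_inv_mul, div_le_div_iff₀ hpos (Real.exp_pos t)]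
      have h2Me' : 2 * (k + H) < Real.exp t := by rw [← hMdef]; exact h2Me
      rw [hcdef, hMdef, div_mul_eq_mul_div, le_div_iff₀ (by positivity)]
      nlinarith [mul_nonneg (mul_nonneg hk.le hH.le) (sub_nonneg.2 h2Me'.le)]
    calc (∫⁻ t in Set.Ioi b, (ℙ : Measure Ω) {ω | t < Real.log (X ω)})
        ≤ ∫⁻ t in Set.Ioi b, ENNReal.ofReal (c * Real.exp (-t)) :=
          setLIntegral_mono (by fun_prop) hbound
      _ = ENNReal.ofReal (∫ t in Set.Ioi b, c * Real.exp (-t)) := by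
          rw [ofReal_integral_eq_lintegral_ofReal]
          · apply Integrable.const_mul
            simpa [IntegrableOn] using exp_neg_integrableOn_Ioi b one_pos
          · filter_upwards with t
            positivity
      _ = ENNReal.ofReal (k / (2 * k + H)) := by
          congr 1
          rw [integral_const_mul, integral_exp_neg_Ioi, Real.exp_neg, heb,
            hcdef, hMdef]
          field_simp
  -- total bound
  set S : ℝ := a + 1 / 2 + k / (2 * k + H) with hSdef
  have hS0 : 0 ≤ S := by positivity
  have htot : (∫⁻ ω, ENNReal.ofReal (Real.log (X ω)) ∂(ℙ : Measure Ω))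
      ≤ ENNReal.ofReal S := by
    rw [key, hsplit]
    calc _ ≤ ENNReal.ofReal a + (ENNReal.ofReal (1/2) + ENNReal.ofReal (k / (2*k+H))) :=
          add_le_add hp1 (add_le_add hp2 hp3)
      _ = ENNReal.ofReal S := by
          rw [hSdef, ← ENNReal.ofReal_add (by positivity) (by positivity),
            ← ENNReal.ofReal_add ha0 (by positivity), add_assoc]
  -- the Bochner integral
  have hint_eq : ∫ ω, Real.log (X ω)
      = (∫⁻ ω, ENNReal.ofReal (Real.log (X ω)) ∂(ℙ : Measure Ω)).toReal :=
    integral_eq_lintegral_of_nonneg_ae hnn hmble.aestronglyMeasurable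
  have hES : ∫ ω, Real.log (X ω) ≤ S := by
    rw [hint_eq]
    exact ENNReal.toReal_le_of_le_ofReal hS0 htot
  have hSlt : S < a + 1 := by
    have : k / (2 * k + H) < 1 / 2 := by
      rw [div_lt_div_iff₀ (by positivity) (by positivity)]
      linarith
    rw [hSdef]; linarith
  -- conclude
  have hfin : ∫ ω, Real.log (X ω) < a + 1 := lt_of_le_of_lt hES hSlt
  calc ∫ ω, Real.log (X ω) / Real.log β
      = (∫ ω, Real.log (X ω)) / Real.log β := by rw [integral_div]
    _ < (a + 1) / Real.log β := by
        rw [div_lt_div_iff₀ hβ' hβ']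
        nlinarith
    _ = Real.log (k + H) / Real.log β + 1 / Real.log β := by
        rw [hadef, hMdef, ← add_div]
end

section
/- Let S ⊆ [n]² be admissible, Ā ∈ M_S with ‖Ā‖_max ≤ 1, σ > 0, and let A ~ N_S(Ā, σ²Id). Then for every (i,j) ∈ S and every t > 1, Prob{|a_{ij}·γ_{ji}| > t} ≤ ((1 + σ)/σ)·(1/(t − 1))·√(2/π), where γ_{ji} denotes the (j,i) entry of A⁻¹ (the event includes the case where A is singular). -/
open MeasureTheory ProbabilityTheory
open scoped ENNReal

instance matrixMeasurableSpace {n : ℕ} : MeasurableSpace (Matrix (Fin n) (Fin n) ℝ) :=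
  inferInstanceAs (MeasurableSpace (Fin n → Fin n → ℝ))

/-- The distribution `N_S(Ā, σ²Id)` of a random sparse matrix: the entries `a_{ij}` with
`(i,j) ∈ S` are independent Gaussians `N(ā_{ij}, σ²)`, and `a_{ij} = 0` for `(i,j) ∉ S`. -/
noncomputable def sparseGaussian {n : ℕ} (S : Finset (Fin n × Fin n))
    (Abar : Matrix (Fin n) (Fin n) ℝ) (σ : ℝ) : Measure (Matrix (Fin n) (Fin n) ℝ) :=
  (Measure.pi fun p : S => gaussianReal (Abar p.1.1 p.1.2) ⟨σ ^ 2, sq_nonneg σ⟩).map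
    fun g => Matrix.of fun i j => if h : (i, j) ∈ S then g ⟨(i, j), h⟩ else 0

/-- The distribution `N(b̄, σ²Id)` on `ℝⁿ`: independent Gaussian entries `N(b̄_i, σ²)`. -/
noncomputable def vecGaussian {n : ℕ} (bbar : Fin n → ℝ) (σ : ℝ) : Measure (Fin n → ℝ) :=
  Measure.pi fun i => gaussianReal (bbar i) ⟨σ ^ 2, sq_nonneg σ⟩

/-- `S ⊆ [n]²` is admissible when `M_S` contains an invertible matrix. -/
def Admissible {n : ℕ} (S : Finset (Fin n × Fin n)) : Prop :=
  ∃ B : Matrix (Fin n) (Fin n) ℝ, (∀ i j, (i, j) ∉ S → B i j = 0) ∧ IsUnit B.det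


open MvPolynomial
open scoped ENNReal

lemma measurable_mv_eval {ι : Type*} [Fintype ι] (P : MvPolynomial ι ℝ) :
    Measurable fun x : ι → ℝ => MvPolynomial.eval x P := by
  classical
  apply MvPolynomial.induction_on P
  · intro a; simpa using measurable_const
  · intro p q hp hq; simp only [map_add]; exact hp.add hq
  · intro p i hp
    simp only [map_mul, MvPolynomial.eval_X]; exact hp.mul (measurable_pi_apply i)

lemma mv_null_fin : ∀ (k : ℕ) (P : MvPolynomial (Fin k) ℝ), P ≠ 0 →
    ∀ (μ : Fin k → Measure ℝ), (∀ i, IsProbabilityMeasure (μ i)) → (∀ i, μ i ≪ volume) →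
    Measure.pi μ {x | MvPolynomial.eval x P = 0} = 0 := by
  intro k
  induction k with
  | zero =>
    intro P hP μ _ _
    convert measure_empty
    · ext x
      simp only [Set.mem_setOf_eq, Set.mem_empty_iff_false, iff_false]
      have : x = (isEmptyElim : Fin 0 → ℝ) := funext fun i => isEmptyElim i
      rw [this]
      rw [MvPolynomial.eq_C_of_isEmpty P] at hP ⊢
      simpa using hP
    · infer_instance
  | succ k ih =>
    intro P hP μ hprob habs
    haveI : ∀ i, IsProbabilityMeasure (μ i) := hprob
    classical
    set Q := finSuccEquiv ℝ k P with hQdef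
    have hQ : Q ≠ 0 := fun h => hP ((finSuccEquiv ℝ k).injective (by rw [← hQdef, h, map_zero]))
    have hcoeff : Q.coeff Q.natDegree ≠ 0 := Polynomial.leadingCoeff_ne_zero.mpr hQ
    set e := MeasurableEquiv.piFinSuccAbove (fun _ : Fin (k+1) => ℝ) 0 with hedef
    have mp := measurePreserving_piFinSuccAbove μ 0
    set ν := Measure.pi fun j : Fin k => μ (Fin.succAbove 0 j) with hνdef
    set Z : Set (Fin (k+1) → ℝ) := {x | MvPolynomial.eval x P = 0} with hZdef
    have hZm : MeasurableSet Z := (measurable_mv_eval P) (measurableSet_singleton 0)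
    have hsm : MeasurableSet (e.symm ⁻¹' Z) := e.symm.measurable hZm
    have key : ∀ (x0 : ℝ) (y : Fin k → ℝ), (e.symm (x0, y) ∈ Z ↔
        Polynomial.eval x0 (Q.map (MvPolynomial.eval y)) = 0) := by
      intro x0 y
      have h1 : e.symm (x0, y) = Fin.cons x0 y := by
        simp only [hedef, MeasurableEquiv.piFinSuccAbove, Fin.insertNthEquiv_zero]
        rfl
      rw [hZdef]
      simp only [Set.mem_setOf_eq, h1]
      rw [MvPolynomial.eval_eq_eval_mv_eval']
    have hZeq : Measure.pi μ Z = ((μ 0).prod ν) (e.symm ⁻¹' Z) := by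
      have : Measure.pi μ Z = Measure.pi μ (e ⁻¹' (e.symm ⁻¹' Z)) := by
        rw [← Set.preimage_comp]
        simp
      rw [this, ← Measure.map_apply e.measurable hsm, mp.map_eq]
    rw [hZeq, Measure.prod_apply_symm hsm]
    have hZd : ν {y | MvPolynomial.eval y (Q.coeff Q.natDegree) = 0} = 0 :=
      ih _ hcoeff _ (fun j => hprob _) (fun j => habs _)
    have hae : ∀ᵐ y ∂ν, MvPolynomial.eval y (Q.coeff Q.natDegree) ≠ 0 := by
      rw [ae_iff]
      simpa using hZd
    have : ∀ᵐ y ∂ν, (μ 0) ((fun x0 => (x0, y)) ⁻¹' (e.symm ⁻¹' Z)) = 0 := by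
      filter_upwards [hae] with y hy
      have hmapne : Q.map (MvPolynomial.eval y) ≠ 0 := by
        intro h
        apply hy
        rw [← Polynomial.coeff_map, h, Polynomial.coeff_zero]
      have hsub : ((fun x0 => (x0, y)) ⁻¹' (e.symm ⁻¹' Z)) ⊆
          {x0 | Polynomial.IsRoot (Q.map (MvPolynomial.eval y)) x0} := by
        intro x0 hx0
        exact (key x0 y).mp hx0
      refine measure_mono_null hsub ?_
      exact (habs 0) ((Polynomial.finite_setOf_isRoot hmapne).measure_zero _)
    rw [lintegral_congr_ae this]
    simp

lemma mv_null {ι : Type*} [Fintype ι] (P : MvPolynomial ι ℝ) (hP : P ≠ 0)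
    (μ : ι → Measure ℝ) (hprob : ∀ i, IsProbabilityMeasure (μ i))
    (habs : ∀ i, μ i ≪ volume) :
    Measure.pi μ {x | MvPolynomial.eval x P = 0} = 0 := by
  classical
  haveI : ∀ i, IsProbabilityMeasure (μ i) := hprob
  obtain ⟨k, ⟨eqv⟩⟩ : ∃ k, Nonempty (Fin k ≃ ι) := ⟨Fintype.card ι, ⟨(Fintype.equivFin ι).symm⟩⟩
  have mp := measurePreserving_piCongrLeft μ eqv
  set e := MeasurableEquiv.piCongrLeft (fun _ : ι => ℝ) eqv with hedef
  set Z : Set (ι → ℝ) := {x | MvPolynomial.eval x P = 0} with hZdef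
  have hZm : MeasurableSet Z := (measurable_mv_eval P) (measurableSet_singleton 0)
  have hZeq : Measure.pi μ Z = (Measure.pi fun i => μ (eqv i)) (e ⁻¹' Z) := by
    rw [← mp.map_eq, Measure.map_apply e.measurable hZm]
  rw [hZeq]
  have hP' : MvPolynomial.rename eqv.symm P ≠ 0 := by
    intro h
    exact hP ((MvPolynomial.rename_injective _ eqv.symm.injective) (by rw [h, map_zero]))
  have hset : e ⁻¹' Z = {x | MvPolynomial.eval x (MvPolynomial.rename eqv.symm P) = 0} := by
    ext x
    simp only [Set.mem_preimage, hZdef, Set.mem_setOf_eq, MvPolynomial.eval_rename]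
    have : e x = fun i => x (eqv.symm i) := by
      funext i
      rw [hedef, MeasurableEquiv.coe_piCongrLeft, Equiv.piCongrLeft_apply_eq_cast]
      exact cast_eq_iff_heq.mpr HEq.rfl
    rw [this]
    rfl
  rw [hset]
  exact mv_null_fin _ _ hP' _ (fun i => hprob _) (fun i => habs _)

lemma measurable_matrix_det {n : ℕ} : Measurable fun A : Matrix (Fin n) (Fin n) ℝ => A.det := by
  simp_rw [Matrix.det_apply]
  apply Finset.measurable_sum
  intro σ _
  apply Measurable.const_smul
  apply Finset.measurable_prod
  intro i _
  exact (measurable_pi_apply i).comp (measurable_pi_apply (σ i))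

lemma measurable_matrix_adjugate {n : ℕ} (i j : Fin n) :
    Measurable fun A : Matrix (Fin n) (Fin n) ℝ => A.adjugate j i := by
  simp_rw [Matrix.adjugate_apply]
  apply measurable_matrix_det.comp
  apply measurable_pi_lambda
  intro a
  by_cases h : a = i
  · subst h; simp only [Matrix.updateRow_self]; exact measurable_const
  · simp only [Matrix.updateRow_ne h]
    exact measurable_pi_apply a

lemma measurable_matrix_inv_entry {n : ℕ} (i j : Fin n) :
    Measurable fun A : Matrix (Fin n) (Fin n) ℝ => A⁻¹ j i := by
  have : (fun A : Matrix (Fin n) (Fin n) ℝ => A⁻¹ j i)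
      = fun A => (Matrix.det A)⁻¹ * A.adjugate j i := by
    funext A
    rw [Matrix.inv_def, Matrix.smul_apply, Ring.inverse_eq_inv', smul_eq_mul]
  rw [this]
  exact measurable_matrix_det.inv.mul (measurable_matrix_adjugate i j)

/-- determinant is affine in one entry -/
lemma det_update_entry {n : ℕ} (M : Matrix (Fin n) (Fin n) ℝ) (i j : Fin n) (hMij : M i j = 0)
    (x : ℝ) :
    (M.updateRow i (Function.update (M i) j x)).det = M.adjugate j i * x + M.det := by
  have h1 : Function.update (M i) j x = M i + Pi.single j x := by
    funext b
    by_cases hb : b = j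
    · subst hb; simp [hMij]
    · simp [Function.update_of_ne hb, Pi.single_eq_of_ne hb]
  have h2 : (Pi.single j x : Fin n → ℝ) = x • (Pi.single j 1 : Fin n → ℝ) := by
    funext b
    by_cases hb : b = j
    · subst hb; simp
    · simp [Pi.single_eq_of_ne hb]
  rw [h1, Matrix.det_updateRow_add, Matrix.updateRow_eq_self, h2, Matrix.det_updateRow_smul,
    Matrix.adjugate_apply]
  ring

lemma quad_interval (t c r x : ℝ) (ht : 1 < t) (hc : c ≠ 0)
    (key : t^2*(c*x+r)^2 < (c*x)^2) :
    |x - (-(t^2*r)/((t^2-1)*c))| ≤ t*(|r|/|c|)/(t^2-1) := by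
  have ht1 : (0:ℝ) < t^2 - 1 := by nlinarith
  have hcabs : 0 < |c| := abs_pos.mpr hc
  have hsq : ((t^2-1)*(c*x) + t^2*r)^2 ≤ (t*|r|)^2 := by nlinarith [sq_abs r]
  have habs : |(t^2-1)*(c*x) + t^2*r| ≤ t*|r| :=
    abs_le_of_sq_le_sq hsq (by positivity)
  have hrw : x - (-(t^2*r)/((t^2-1)*c)) = ((t^2-1)*(c*x) + t^2*r)/((t^2-1)*c) := by
    field_simp
    ring
  rw [hrw, abs_div, abs_mul, abs_of_pos ht1, div_le_iff₀ (by positivity)]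
  calc |(t^2-1)*(c*x) + t^2*r| ≤ t*|r| := habs
    _ = t*(|r|/|c|)/(t^2-1)*((t^2-1)*|c|) := by
        field_simp

lemma exp_decay_bound (σ a : ℝ) (hσ : 0 < σ) (ha1 : 0 ≤ a + 1) :
    (a + 1) * Real.exp (-(max a 0)^2/(2*σ^2)) ≤ 1 + σ := by
  have h2σ : (0:ℝ) < 2*σ^2 := by positivity
  rcases le_or_gt a 0 with ha | ha
  · have hE : Real.exp (-(max a 0)^2/(2*σ^2)) ≤ 1 := by
      rw [neg_div]
      exact Real.exp_le_one_iff.mpr (neg_nonpos.mpr (by positivity))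
    nlinarith [Real.exp_pos (-(max a 0)^2/(2*σ^2))]
  · have hmax : max a 0 = a := max_eq_left ha.le
    rw [hmax, neg_div]
    set y := a^2/(2*σ^2) with hy
    have hy0 : 0 ≤ y := by positivity
    have hinv : Real.exp (-y) ≤ (1+y)⁻¹ := by
      rw [Real.exp_neg]
      exact inv_anti₀ (by linarith) (by linarith [Real.add_one_le_exp y])
    have hkey2 : (a+1)*(2*σ^2) ≤ (1+σ)*(2*σ^2 + a^2) := by
      nlinarith [mul_nonneg hσ.le (sq_nonneg (a-σ)), pow_pos hσ 3]
    have hkey : a + 1 ≤ (1+σ)*(1+y) := by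
      have hy' : (1+σ)*(1+y) = (1+σ)*(2*σ^2+a^2)/(2*σ^2) := by
        rw [hy]; field_simp
      rw [hy', le_div_iff₀ h2σ]
      exact hkey2
    calc (a+1) * Real.exp (-y) ≤ (a+1)*(1+y)⁻¹ :=
          mul_le_mul_of_nonneg_left hinv ha1
      _ = (a+1)/(1+y) := by ring
      _ ≤ 1+σ := (div_le_iff₀ (by linarith)).mpr (by nlinarith)

lemma gauss_interval_bound (σ : ℝ) (hσ : 0 < σ) (abar : ℝ) (habar : |abar| ≤ 1)
    (t : ℝ) (ht : 1 < t) (ρ : ℝ) (hρ : 0 ≤ ρ) (x₀ : ℝ)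
    (hx0 : t^2*ρ/(t^2-1) ≤ |x₀|) :
    gaussianReal abar ⟨σ^2, sq_nonneg σ⟩ {x : ℝ | |x - x₀| ≤ t*ρ/(t^2-1)}
      ≤ ENNReal.ofReal ((1+σ)/σ * (1/(t-1)) * Real.sqrt (2/Real.pi)) := by
  have hπ := Real.pi_pos
  have hV : (⟨σ^2, sq_nonneg σ⟩ : NNReal) ≠ 0 := by
    intro h
    have : σ^2 = 0 := congrArg NNReal.toReal h
    exact (by positivity : (0:ℝ) < σ^2).ne' this
  have ht1 : (0:ℝ) < t^2 - 1 := by nlinarith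
  have htm : (0:ℝ) < t - 1 := by linarith
  have htp : (0:ℝ) < t + 1 := by linarith
  set H := t*ρ/(t^2-1) with hH
  have hH0 : 0 ≤ H := by positivity
  set a := t*ρ/(t+1) - 1 with ha
  have ha1 : a + 1 = t*ρ/(t+1) := by rw [ha]; ring
  have ha1' : 0 ≤ a + 1 := by rw [ha1]; positivity
  set E := Real.exp (-(max a 0)^2/(2*σ^2)) with hE
  have hE0 : 0 < E := Real.exp_pos _
  set D := (σ * Real.sqrt (2*Real.pi))⁻¹ * E with hD
  have hD0 : 0 ≤ D := by positivity
  have hIcc : {x : ℝ | |x - x₀| ≤ H} = Set.Icc (x₀ - H) (x₀ + H) := by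
    ext x
    rw [Set.mem_setOf_eq, Set.mem_Icc, abs_le]
    constructor <;> intro h <;> constructor <;> linarith [h.1, h.2]
  have hsub : t^2*ρ/(t^2-1) - H = a + 1 := by
    rw [ha1, hH]
    field_simp
    ring
  have hpdf : ∀ x ∈ Set.Icc (x₀ - H) (x₀ + H),
      gaussianPDFReal abar ⟨σ^2, sq_nonneg σ⟩ x ≤ D := by
    intro x hx
    have hx' : |x - x₀| ≤ H := by
      rw [Set.mem_Icc] at hx
      rw [abs_le]
      constructor <;> linarith [hx.1, hx.2]
    have hsq2 : (max a 0)^2 ≤ (x - abar)^2 := by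
      rcases le_or_gt a 0 with ha0 | ha0
      · rw [max_eq_right ha0]
        simpa using sq_nonneg (x - abar)
      · rw [max_eq_left ha0.le]
        have h1 : |x₀| - |x| ≤ |x - x₀| := by
          have := abs_sub_abs_le_abs_sub x₀ x
          rw [abs_sub_comm] at this
          linarith
        have h2 : a + 1 ≤ |x| := by
          rw [← hsub]
          linarith [hx0, hx', h1]
        have h3 : a ≤ |x - abar| := by
          have := abs_sub_abs_le_abs_sub x abar
          linarith [habar, h2]
        calc a^2 ≤ |x - abar|^2 := pow_le_pow_left₀ ha0.le h3 2
          _ = (x - abar)^2 := sq_abs _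
    simp only [ProbabilityTheory.gaussianPDFReal, NNReal.coe_mk]
    have hsqrt : Real.sqrt (2*Real.pi*σ^2) = σ * Real.sqrt (2*Real.pi) := by
      rw [mul_comm, Real.sqrt_mul (sq_nonneg σ), Real.sqrt_sq hσ.le]
    show (Real.sqrt (2*Real.pi*σ^2))⁻¹ * Real.exp (-(x - abar)^2/(2*σ^2)) ≤ D
    rw [hsqrt, hD]
    apply mul_le_mul_of_nonneg_left _ (by positivity)
    rw [hE]
    apply Real.exp_le_exp.mpr
    rw [neg_div, neg_div, neg_le_neg_iff]
    exact div_le_div_of_nonneg_right hsq2 (by positivity)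
  calc gaussianReal abar ⟨σ^2, sq_nonneg σ⟩ {x : ℝ | |x - x₀| ≤ H}
      = ENNReal.ofReal (∫ x in Set.Icc (x₀ - H) (x₀ + H),
          gaussianPDFReal abar ⟨σ^2, sq_nonneg σ⟩ x) := by
        rw [gaussianReal_apply_eq_integral abar hV, hIcc]
    _ ≤ ENNReal.ofReal (2*H*D) := by
        apply ENNReal.ofReal_le_ofReal
        calc ∫ x in Set.Icc (x₀ - H) (x₀ + H), gaussianPDFReal abar ⟨σ^2, sq_nonneg σ⟩ x
            ≤ ∫ _x in Set.Icc (x₀ - H) (x₀ + H), D := by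
              apply setIntegral_mono_on
              · exact (integrable_gaussianPDFReal _ _).integrableOn
              · exact (integrableOn_const_iff).mpr (Or.inr measure_Icc_lt_top)
              · exact measurableSet_Icc
              · exact hpdf
          _ = 2*H*D := by
              rw [setIntegral_const, measureReal_def, Real.volume_Icc, smul_eq_mul,
                ENNReal.toReal_ofReal (by linarith)]
              ring_nf
    _ ≤ ENNReal.ofReal ((1+σ)/σ * (1/(t-1)) * Real.sqrt (2/Real.pi)) := by
        apply ENNReal.ofReal_le_ofReal
        have hs2 : Real.sqrt (2/Real.pi) = 2 / Real.sqrt (2*Real.pi) := by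
          have hsπ : (0:ℝ) < Real.sqrt (2*Real.pi) := Real.sqrt_pos.mpr (by positivity)
          rw [eq_div_iff hsπ.ne', ← Real.sqrt_mul (by positivity)]
          rw [show 2/Real.pi*(2*Real.pi) = 2^2 by field_simp]
          exact Real.sqrt_sq (by norm_num)
        have hdecay := exp_decay_bound σ a hσ ha1'
        rw [ha1] at hdecay
        have hHsplit : 2*H*D = (2/(σ * Real.sqrt (2*Real.pi))) * (1/(t-1)) * ((t*ρ/(t+1))*E) := by
          rw [hH, hD]
          have hsπ : (0:ℝ) < Real.sqrt (2*Real.pi) := Real.sqrt_pos.mpr (by positivity)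
          field_simp
          ring
        rw [hHsplit, hs2]
        have hc0 : 0 ≤ (2/(σ * Real.sqrt (2*Real.pi))) * (1/(t-1)) := by positivity
        calc (2/(σ * Real.sqrt (2*Real.pi))) * (1/(t-1)) * ((t*ρ/(t+1))*E)
            ≤ (2/(σ * Real.sqrt (2*Real.pi))) * (1/(t-1)) * (1+σ) :=
              mul_le_mul_of_nonneg_left hdecay hc0
          _ = (1+σ)/σ * (1/(t-1)) * (2/Real.sqrt (2*Real.pi)) := by ring

lemma slice_bound (σ : ℝ) (hσ : 0 < σ) (t : ℝ) (ht : 1 < t) (abar : ℝ) (habar : |abar| ≤ 1)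
    (c r : ℝ) (hcr : c ≠ 0 ∨ r ≠ 0) :
    gaussianReal abar ⟨σ^2, sq_nonneg σ⟩
        {x : ℝ | c*x + r = 0 ∨ t < |x * ((c*x + r)⁻¹ * c)|}
      ≤ ENNReal.ofReal ((1+σ)/σ * (1/(t-1)) * Real.sqrt (2/Real.pi)) := by
  have hV : (⟨σ^2, sq_nonneg σ⟩ : NNReal) ≠ 0 := by
    intro h
    have : σ^2 = 0 := congrArg NNReal.toReal h
    exact (by positivity : (0:ℝ) < σ^2).ne' this
  have habscont := gaussianReal_absolutelyContinuous abar hV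
  have ht1 : (0:ℝ) < t^2 - 1 := by nlinarith
  rcases eq_or_ne c 0 with hc | hc
  · have hr : r ≠ 0 := hcr.resolve_left (by simp [hc])
    have hset : {x : ℝ | c*x + r = 0 ∨ t < |x * ((c*x + r)⁻¹ * c)|} = ∅ := by
      ext x
      simp only [hc, zero_mul, zero_add, mul_zero, abs_zero, Set.mem_setOf_eq,
        Set.mem_empty_iff_false, iff_false, not_or]
      exact ⟨hr, by simp; linarith⟩
    rw [hset]
    simp
  · have hcabs : 0 < |c| := abs_pos.mpr hc
    set x₀ := -(t^2*r)/((t^2-1)*c) with hx₀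
    set ρ := |r|/|c| with hρdef
    have hsubset : {x : ℝ | c*x + r = 0 ∨ t < |x * ((c*x + r)⁻¹ * c)|}
        ⊆ {x : ℝ | c*x + r = 0} ∪ {x : ℝ | |x - x₀| ≤ t*ρ/(t^2-1)} := by
      intro x hx
      rcases hx with h | h
      · exact Or.inl h
      · rcases eq_or_ne (c*x + r) 0 with hd | hd
        · exact Or.inl hd
        · right
          have habs0 : 0 < |c*x + r| := abs_pos.mpr hd
          rw [abs_mul, abs_mul, abs_inv] at h
          have h1 : t * |c*x + r| < |x| * |c| := by
            calc t * |c*x+r| < (|x| * (|c*x+r|⁻¹*|c|)) * |c*x+r| :=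
                  mul_lt_mul_of_pos_right h habs0
              _ = |x| * |c| := by field_simp
          have key : t^2*(c*x+r)^2 < (c*x)^2 := by
            have h2 : (t*|c*x+r|)^2 < (|x| * |c|)^2 := by
              apply pow_lt_pow_left₀ h1 (by positivity)
              norm_num
            calc t^2*(c*x+r)^2 = (t*|c*x+r|)^2 := by rw [mul_pow, sq_abs]
              _ < (|x| * |c|)^2 := h2
              _ = (c*x)^2 := by rw [← abs_mul, sq_abs]; ring
          show |x - x₀| ≤ t*ρ/(t^2-1)
          rw [hx₀, hρdef]
          exact quad_interval t c r x ht hc key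
    refine (measure_mono hsubset).trans ((measure_union_le _ _).trans ?_)
    have h0 : gaussianReal abar ⟨σ^2, sq_nonneg σ⟩ {x : ℝ | c*x + r = 0} = 0 := by
      have hsingle : {x : ℝ | c*x + r = 0} = {-r/c} := by
        ext x
        rw [Set.mem_setOf_eq, Set.mem_singleton_iff]
        constructor
        · intro hx
          field_simp
          linarith
        · intro hx
          rw [hx]
          field_simp
          ring
      rw [hsingle]
      exact habscont (measure_singleton _)
    rw [h0, zero_add]
    have hx0abs : |x₀| = t^2*ρ/(t^2-1) := by
      rw [hx₀, hρdef, abs_div, abs_neg, abs_mul, abs_mul,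
        abs_of_pos (by positivity : (0:ℝ) < t^2), abs_of_pos ht1]
      field_simp
    exact gauss_interval_bound σ hσ abar habar t ht ρ (by positivity) x₀ (le_of_eq hx0abs.symm)

set_option maxHeartbeats 2000000 in
/-- Let `S ⊆ [n]²` be admissible, `Ā ∈ M_S` with `‖Ā‖_max ≤ 1`, `σ > 0`
and `A ~ N_S(Ā, σ²Id)`. For `(i,j) ∈ S` and `t > 1`,
`Prob{|a_{ij}·γ_{ji}| > t} ≤ ((1+σ)/σ)·(1/(t−1))·√(2/π)`, where `γ = A⁻¹`
(the event includes the case where `A` is singular). -/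
theorem prob_entry_gt {n : ℕ} (S : Finset (Fin n × Fin n)) (hS : Admissible S)
    (Abar : Matrix (Fin n) (Fin n) ℝ) (hsupp : ∀ i j, (i, j) ∉ S → Abar i j = 0)
    (hmax : ∀ i j, |Abar i j| ≤ 1) (σ : ℝ) (hσ : 0 < σ)
    (i j : Fin n) (hij : (i, j) ∈ S) (t : ℝ) (ht : 1 < t) :
    sparseGaussian S Abar σ {A | A.det = 0 ∨ t < |A i j * A⁻¹ j i|}
      ≤ ENNReal.ofReal ((1 + σ) / σ * (1 / (t - 1)) * Real.sqrt (2 / Real.pi)) := by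
  classical
  set V : NNReal := ⟨σ^2, sq_nonneg σ⟩ with hVdef
  have hV : V ≠ 0 := by
    intro h
    have h2 : σ^2 = 0 := congrArg NNReal.toReal h
    exact (by positivity : (0:ℝ) < σ^2).ne' h2
  set μs : {p : Fin n × Fin n // p ∈ S} → Measure ℝ :=
    fun p => gaussianReal (Abar p.1.1 p.1.2) V with hμs
  haveI hprobs : ∀ p, IsProbabilityMeasure (μs p) := fun p => by
    rw [hμs]; infer_instance
  set F : ({p : Fin n × Fin n // p ∈ S} → ℝ) → Matrix (Fin n) (Fin n) ℝ :=
    fun g => Matrix.of fun a b => if h : (a, b) ∈ S then g ⟨(a, b), h⟩ else 0 with hFdef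
  have hF : Measurable F := by
    apply measurable_pi_lambda
    intro a
    apply measurable_pi_lambda
    intro b
    by_cases h : (a, b) ∈ S
    · simpa [hFdef, h] using measurable_pi_apply (⟨(a, b), h⟩ : {p : Fin n × Fin n // p ∈ S})
    · simpa [hFdef, h] using measurable_const
  set E : Set (Matrix (Fin n) (Fin n) ℝ) := {A | A.det = 0 ∨ t < |A i j * A⁻¹ j i|} with hEdef
  have hEm : MeasurableSet E := by
    rw [hEdef, Set.setOf_or]
    apply MeasurableSet.union
    · exact measurable_matrix_det (measurableSet_singleton 0)
    · have hm : Measurable fun A : Matrix (Fin n) (Fin n) ℝ => |A i j * A⁻¹ j i| := by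
        apply Measurable.abs
        exact ((show Measurable fun A : Matrix (Fin n) (Fin n) ℝ => A i j from
          (measurable_pi_apply j).comp (measurable_pi_apply i)).mul
          (measurable_matrix_inv_entry i j))
      exact measurableSet_lt measurable_const hm
  have hmap : sparseGaussian S Abar σ E = Measure.pi μs (F ⁻¹' E) := by
    rw [sparseGaussian]
    exact Measure.map_apply hF hEm
  -- split off coordinate p₀
  set p₀ : {p : Fin n × Fin n // p ∈ S} := ⟨(i, j), hij⟩ with hp₀
  set pr : {p : Fin n × Fin n // p ∈ S} → Prop := fun p => p ≠ p₀ with hpr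
  haveI hUinst : Unique {q : {p : Fin n × Fin n // p ∈ S} // ¬ pr q} := by
    refine ⟨⟨⟨p₀, by simp [hpr]⟩⟩, ?_⟩
    rintro ⟨q, hq⟩
    simp only [hpr, ne_eq, not_not] at hq
    exact Subtype.ext hq
  set ν₁ := Measure.pi (fun q : {q // pr q} => μs q) with hν₁
  set ν₂ := Measure.pi (fun q : {q // ¬ pr q} => μs q) with hν₂
  haveI : IsProbabilityMeasure ν₁ := by rw [hν₁]; infer_instance
  haveI : IsProbabilityMeasure ν₂ := by rw [hν₂]; infer_instance
  set γ : Measure ℝ := gaussianReal (Abar i j) V with hγ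
  haveI : IsProbabilityMeasure γ := by rw [hγ]; infer_instance
  set e₁ := MeasurableEquiv.piEquivPiSubtypeProd (fun _ : {p : Fin n × Fin n // p ∈ S} => ℝ) pr
    with he₁
  have mp₁ := measurePreserving_piEquivPiSubtypeProd μs pr
  set e₂ := MeasurableEquiv.piUnique (fun _ : {q : {p : Fin n × Fin n // p ∈ S} // ¬ pr q} => ℝ)
    with he₂
  have mp₂ := measurePreserving_piUnique (fun q : {q // ¬ pr q} => μs q)
  have hdefval : ((default : {q // ¬ pr q}) : {p : Fin n × Fin n // p ∈ S}) = p₀ := by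
    have h := (default : {q // ¬ pr q}).2
    simp only [hpr, ne_eq, not_not] at h
    exact h
  have hγdef : μs ((default : {q // ¬ pr q}) : {p : Fin n × Fin n // p ∈ S}) = γ := by
    rw [hdefval, hμs, hγ, hp₀]
  -- the sliced matrix map
  set G : ({q // pr q} → ℝ) → ℝ → Matrix (Fin n) (Fin n) ℝ :=
    fun g' x => F (e₁.symm (g', fun _ => x)) with hG
  have hcoord : ∀ (g' : {q // pr q} → ℝ) (x : ℝ) (q : {p : Fin n × Fin n // p ∈ S}),
      e₁.symm (g', fun _ => x) q = if h : pr q then g' ⟨q, h⟩ else x := by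
    intro g' x q
    rw [he₁]
    simp [MeasurableEquiv.piEquivPiSubtypeProd]
  have hentry : ∀ g' x a b, G g' x a b =
      if h : (a, b) ∈ S then (if hq : pr ⟨(a, b), h⟩ then g' ⟨⟨(a, b), h⟩, hq⟩ else x) else 0 := by
    intro g' x a b
    rw [hG]
    show F (e₁.symm (g', fun _ => x)) a b = _
    rw [hFdef]
    simp only [Matrix.of_apply]
    by_cases h : (a, b) ∈ S
    · rw [dif_pos h, dif_pos h, hcoord]
    · rw [dif_neg h, dif_neg h]
  have hGij : ∀ g' x, G g' x i j = x := by
    intro g' x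
    rw [hentry g' x i j, dif_pos hij]
    have hnot : ¬ pr ⟨(i, j), hij⟩ := by simp [hpr, hp₀]
    rw [dif_neg hnot]
  have hGoff : ∀ g' x a b, ¬(a = i ∧ b = j) → G g' x a b = G g' 0 a b := by
    intro g' x a b hab
    rw [hentry, hentry]
    by_cases h : (a, b) ∈ S
    · have hq : pr ⟨(a, b), h⟩ := by
        simp only [hpr, ne_eq, hp₀]
        intro hcontr
        have := Subtype.ext_iff.mp hcontr
        rw [Prod.mk.injEq] at this
        exact hab this
      rw [dif_pos h, dif_pos h, dif_pos hq, dif_pos hq]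
    · rw [dif_neg h, dif_neg h]
  have hrep : ∀ g' x, G g' x =
      Matrix.updateRow (G g' 0) i (Function.update (G g' 0 i) j x) := by
    intro g' x
    ext a b
    by_cases ha : a = i
    · subst ha
      rw [Matrix.updateRow_self]
      by_cases hb : b = j
      · subst hb
        rw [Function.update_self]
        exact hGij g' x
      · rw [Function.update_of_ne hb]
        exact hGoff g' x a b (fun hh => hb hh.2)
    · rw [Matrix.updateRow_ne ha]
      exact hGoff g' x a b (fun hh => ha hh.1)
  set cf : ({q // pr q} → ℝ) → ℝ := fun g' => (G g' 0).adjugate j i with hcf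
  set rf : ({q // pr q} → ℝ) → ℝ := fun g' => (G g' 0).det with hrf
  have hdet : ∀ g' x, (G g' x).det = cf g' * x + rf g' := by
    intro g' x
    rw [hrep g' x, det_update_entry _ i j (hGij g' 0) x, hcf, hrf]
  have hupdate2 : ∀ (M : Matrix (Fin n) (Fin n) ℝ) (v w : Fin n → ℝ),
      Matrix.updateRow (Matrix.updateRow M i v) i w = Matrix.updateRow M i w := by
    intro M v w
    ext a b
    by_cases ha : a = i
    · subst ha; rw [Matrix.updateRow_self, Matrix.updateRow_self]
    · rw [Matrix.updateRow_ne ha, Matrix.updateRow_ne ha, Matrix.updateRow_ne ha]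
  have hadj : ∀ g' x, (G g' x).adjugate j i = cf g' := by
    intro g' x
    rw [hcf]
    show _ = (G g' 0).adjugate j i
    rw [Matrix.adjugate_apply, Matrix.adjugate_apply, hrep g' x, hupdate2]
  have hinv : ∀ g' x, (G g' x)⁻¹ j i = (cf g' * x + rf g')⁻¹ * cf g' := by
    intro g' x
    rw [Matrix.inv_def, Matrix.smul_apply, smul_eq_mul, Ring.inverse_eq_inv', hdet, hadj]
  have hsliceset : ∀ g', {x : ℝ | G g' x ∈ E} =
      {x : ℝ | cf g' * x + rf g' = 0 ∨ t < |x * ((cf g' * x + rf g')⁻¹ * cf g')|} := by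
    intro g'
    ext x
    simp only [hEdef, Set.mem_setOf_eq]
    rw [hdet g' x, hGij g' x, hinv g' x]
  -- Fubini
  have hkey : ∀ (T : Set (Matrix (Fin n) (Fin n) ℝ)), MeasurableSet T →
      (Measure.pi μs (F ⁻¹' T) = ∫⁻ g', γ {x | G g' x ∈ T} ∂ν₁) ∧
      Measurable fun g' => γ {x | G g' x ∈ T} := by
    intro T hT
    have hZm : MeasurableSet (F ⁻¹' T) := hF hT
    set W := e₁.symm ⁻¹' (F ⁻¹' T) with hW
    have hWm : MeasurableSet W := e₁.symm.measurable hZm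
    have h1 : Measure.pi μs (F ⁻¹' T) = (ν₁.prod ν₂) W := by
      rw [← mp₁.map_eq, Measure.map_apply e₁.measurable hWm, hW, ← Set.preimage_comp,
        MeasurableEquiv.symm_comp_self, Set.preimage_id]
    have h3 : ∀ g', ν₂ (Prod.mk g' ⁻¹' W) = γ {x | G g' x ∈ T} := by
      intro g'
      have hset : Prod.mk g' ⁻¹' W = e₂ ⁻¹' {x | G g' x ∈ T} := by
        ext h
        simp only [Set.mem_preimage, hW, Set.mem_setOf_eq]
        have hh : (fun _ : {q // ¬ pr q} => h default) = h :=
          funext fun q => by rw [Unique.eq_default q]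
        have he₂h : e₂ h = h default := rfl
        rw [he₂h, hG]
        show F (e₁.symm (g', h)) ∈ T ↔ F (e₁.symm (g', fun _ => h default)) ∈ T
        rw [hh]
      have hGm : Measurable (G g') := by
        have : G g' = fun x => F (e₁.symm (g', fun _ => x)) := by rw [hG]
        rw [this]
        exact hF.comp (e₁.symm.measurable.comp
          (measurable_const.prodMk (measurable_pi_lambda _ fun _ => measurable_id)))
      have hTsm : MeasurableSet {x | G g' x ∈ T} := hGm hT
      rw [hset, he₂]
      rw [(measurePreserving_piUnique (fun q : {q // ¬ pr q} => μs q)).measure_preimage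
        hTsm.nullMeasurableSet]
      rw [hγdef]
    constructor
    · rw [h1, Measure.prod_apply hWm]
      exact lintegral_congr h3
    · have := measurable_measure_prodMk_left (ν := ν₂) hWm
      have heq : (fun g' => ν₂ (Prod.mk g' ⁻¹' W)) = fun g' => γ {x | G g' x ∈ T} :=
        funext h3
      rw [← heq]
      exact this
  -- determinant polynomial, nonvanishing a.e.
  set detP : MvPolynomial {p : Fin n × Fin n // p ∈ S} ℝ :=
    (Matrix.of fun a b => if h : (a, b) ∈ S then
      (MvPolynomial.X ⟨(a, b), h⟩ : MvPolynomial {p : Fin n × Fin n // p ∈ S} ℝ)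
      else 0).det with hdetP
  have hevalP : ∀ g, MvPolynomial.eval g detP = (F g).det := by
    intro g
    rw [hdetP, RingHom.map_det]
    congr 1
    ext a b
    rw [hFdef]
    simp only [RingHom.mapMatrix_apply, Matrix.map_apply, Matrix.of_apply]
    by_cases h : (a, b) ∈ S
    · rw [dif_pos h, dif_pos h, MvPolynomial.eval_X]
    · rw [dif_neg h, dif_neg h, map_zero]
  have hPne : detP ≠ 0 := by
    obtain ⟨B, hB0, hBdet⟩ := hS
    intro h0
    have hFB : F (fun p => B p.1.1 p.1.2) = B := by
      ext a b
      rw [hFdef]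
      simp only [Matrix.of_apply]
      by_cases h : (a, b) ∈ S
      · rw [dif_pos h]
      · rw [dif_neg h, hB0 a b h]
    have h1 : (F (fun p => B p.1.1 p.1.2)).det ≠ 0 := by
      rw [hFB]
      exact isUnit_iff_ne_zero.mp hBdet
    exact h1 ((hevalP (fun p => B p.1.1 p.1.2)).symm.trans (by rw [h0, map_zero]))
  have hdetm : MeasurableSet {A : Matrix (Fin n) (Fin n) ℝ | A.det = 0} :=
    measurable_matrix_det (measurableSet_singleton 0)
  have hdet0 : Measure.pi μs (F ⁻¹' {A | A.det = 0}) = 0 := by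
    have hpre : F ⁻¹' {A | A.det = 0} = {g | MvPolynomial.eval g detP = 0} := by
      ext g
      simp only [Set.mem_preimage, Set.mem_setOf_eq, hevalP g]
    rw [hpre]
    exact mv_null detP hPne μs hprobs (fun p => by
      rw [hμs]; exact gaussianReal_absolutelyContinuous _ hV)
  obtain ⟨hFubdet, hmdet⟩ := hkey _ hdetm
  have hae0 : ∀ᵐ g' ∂ν₁, γ {x | G g' x ∈ {A : Matrix (Fin n) (Fin n) ℝ | A.det = 0}} = 0 := by
    have h5 : ∫⁻ g', γ {x | G g' x ∈ {A : Matrix (Fin n) (Fin n) ℝ | A.det = 0}} ∂ν₁ = 0 := by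
      rw [← hFubdet]; exact hdet0
    exact (lintegral_eq_zero_iff hmdet).mp h5
  have haecr : ∀ᵐ g' ∂ν₁, cf g' ≠ 0 ∨ rf g' ≠ 0 := by
    filter_upwards [hae0] with g' hg'
    by_contra hcon
    push_neg at hcon
    obtain ⟨hc0, hr0⟩ := hcon
    have huniv : {x : ℝ | (G g' x).det = 0} = Set.univ := by
      ext x
      simp [Set.mem_setOf_eq, hdet g' x, hc0, hr0]
    rw [huniv] at hg'
    exact one_ne_zero ((measure_univ (μ := γ)).symm.trans hg')
  obtain ⟨hFubE, _⟩ := hkey E hEm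
  rw [hmap, hFubE]
  have hbnd : ∀ᵐ g' ∂ν₁, γ {x | G g' x ∈ E}
      ≤ ENNReal.ofReal ((1 + σ) / σ * (1 / (t - 1)) * Real.sqrt (2 / Real.pi)) := by
    filter_upwards [haecr] with g' hcr
    rw [hsliceset g', hγ]
    exact slice_bound σ hσ t ht (Abar i j) (hmax i j) (cf g') (rf g') hcr
  calc ∫⁻ g', γ {x | G g' x ∈ E} ∂ν₁
      ≤ ∫⁻ _, ENNReal.ofReal ((1 + σ) / σ * (1 / (t - 1)) * Real.sqrt (2 / Real.pi)) ∂ν₁ :=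
        lintegral_mono_ae hbnd
    _ = ENNReal.ofReal ((1 + σ) / σ * (1 / (t - 1)) * Real.sqrt (2 / Real.pi)) := by
        rw [lintegral_const, measure_univ, mul_one]
end

section
/- Let A be an invertible n×n real matrix and k, l ∈ [n]. Then the componentwise condition number of the map F_{kl}(A) = (A⁻¹)_{kl} at A satisfies c†_{kl}(A) ≤ c^det(A) + c^det(A_{lk}), where A_{lk} is the (n−1)×(n−1) submatrix of A obtained by deleting the l-th row and k-th column of A. -/
open MeasureTheory ProbabilityTheory
open scoped ENNReal

/-- Componentwise "distance" `d(u,v) = ‖(u−v)/v‖_∞`, valued in `[0,∞]`: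
the `i`-th component of the quotient is `|u i − v i|/|v i|` if `v i ≠ 0`,
`0` if `u i = v i = 0`, and `∞` otherwise. -/
noncomputable def cwDist {ι : Type*} (u v : ι → ℝ) : ℝ≥0∞ :=
  ⨆ i, if v i ≠ 0 then ENNReal.ofReal (|u i - v i| / |v i|)
       else if u i = v i then 0 else ⊤

/-- Componentwise condition number of `F : D ⊆ ℝ^ι → ℝ^κ` at `a`:
`c^F(a) = lim_{δ→0} sup { d(F x, F a)/d(x,a) : x ∈ D, d(x,a) ≤ δ, x ≠ a }`,
the limit being an infimum since the sup is monotone in `δ`. -/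
noncomputable def cwCond {ι κ : Type*} (D : Set (ι → ℝ)) (F : (ι → ℝ) → κ → ℝ)
    (a : ι → ℝ) : ℝ≥0∞ :=
  ⨅ δ ∈ Set.Ioi (0 : ℝ≥0∞),
    ⨆ x ∈ {x ∈ D | cwDist x a ≤ δ ∧ x ≠ a}, cwDist (F x) (F a) / cwDist x a

/-- A matrix viewed as a point of `ℝ^(n×n)`. -/
def matToFun {n : ℕ} (A : Matrix (Fin n) (Fin n) ℝ) : Fin n × Fin n → ℝ :=
  fun p => A p.1 p.2

/-- A point of `ℝ^(n×n)` viewed as a matrix. -/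
def funToMat {n : ℕ} (x : Fin n × Fin n → ℝ) : Matrix (Fin n) (Fin n) ℝ :=
  Matrix.of fun i j => x (i, j)

/-- The componentwise condition number `c^det(A)` of determinant computation at `A`. -/
noncomputable def cDet {n : ℕ} (A : Matrix (Fin n) (Fin n) ℝ) : ℝ≥0∞ :=
  cwCond Set.univ (fun x (_ : Unit) => (funToMat x).det) (matToFun A)

/-- The componentwise condition number `c†_{kl}(A)` of the map `A ↦ (A⁻¹)_{kl}` at `A`. -/
noncomputable def cInv {n : ℕ} (k l : Fin n) (A : Matrix (Fin n) (Fin n) ℝ) : ℝ≥0∞ :=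
  cwCond {x | IsUnit (funToMat x).det}
    (fun x (_ : Unit) => (funToMat x)⁻¹ k l) (matToFun A)

/-- `c†(A) = max_{k,l} c†_{kl}(A)`. -/
noncomputable def cInvMax {n : ℕ} (A : Matrix (Fin n) (Fin n) ℝ) : ℝ≥0∞ :=
  ⨆ k, ⨆ l, cInv k l A

/-- A pair (matrix, right-hand side) viewed as a point of `ℝ^(n×n+n)`. -/
def pairToFun {n : ℕ} (A : Matrix (Fin n) (Fin n) ℝ) (b : Fin n → ℝ) :
    (Fin n × Fin n) ⊕ Fin n → ℝ :=
  Sum.elim (fun p => A p.1 p.2) b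

def funToMat' {n : ℕ} (x : (Fin n × Fin n) ⊕ Fin n → ℝ) : Matrix (Fin n) (Fin n) ℝ :=
  Matrix.of fun i j => x (Sum.inl (i, j))

def funToVec {n : ℕ} (x : (Fin n × Fin n) ⊕ Fin n → ℝ) : Fin n → ℝ :=
  fun i => x (Sum.inr i)

/-- The componentwise condition number `c_k(A,b)` of the map `(A,b) ↦ (A⁻¹b)_k` at `(A,b)`. -/
noncomputable def cLin {n : ℕ} (k : Fin n) (A : Matrix (Fin n) (Fin n) ℝ)
    (b : Fin n → ℝ) : ℝ≥0∞ :=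
  cwCond {x | IsUnit (funToMat' x).det}
    (fun x (_ : Unit) => (Matrix.mulVec (funToMat' x)⁻¹ (funToVec x)) k) (pairToFun A b)

/-- `c(A,b) = max_k c_k(A,b)`. -/
noncomputable def cLinMax {n : ℕ} (A : Matrix (Fin n) (Fin n) ℝ) (b : Fin n → ℝ) : ℝ≥0∞ :=
  ⨆ k, cLin k A b

section Aux

lemma cwDist_single (s t : ℝ) :
    cwDist (fun _ : Unit => s) (fun _ : Unit => t) =
      if t ≠ 0 then ENNReal.ofReal (|s - t| / |t|) else if s = t then 0 else ⊤ := by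
  simp [cwDist]

lemma cwDist_comp_le {ι κ : Type*} (φ : κ → ι) (u v : ι → ℝ) :
    cwDist (fun p => u (φ p)) (fun p => v (φ p)) ≤ cwDist u v := by
  exact iSup_comp_le (fun i => if v i ≠ 0 then ENNReal.ofReal (|u i - v i| / |v i|)
      else if u i = v i then 0 else ⊤) φ

lemma cwDist_le_apply {ι : Type*} (u v : ι → ℝ) (i : ι) :
    (if v i ≠ 0 then ENNReal.ofReal (|u i - v i| / |v i|)
      else if u i = v i then 0 else ⊤) ≤ cwDist u v :=
  le_iSup (fun i => if v i ≠ 0 then ENNReal.ofReal (|u i - v i| / |v i|)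
      else if u i = v i then 0 else ⊤) i

lemma cwDist_eq_zero {ι : Type*} {u v : ι → ℝ} (h : cwDist u v = 0) : u = v := by
  funext i
  have hi := cwDist_le_apply u v i
  rw [h, le_zero_iff] at hi
  by_cases hv : v i = 0
  · by_contra hne
    simp [hv, hne] at hi
    exact hne (hv ▸ hi)
  · rw [if_pos hv] at hi
    rw [ENNReal.ofReal_eq_zero] at hi
    have hvpos : 0 < |v i| := abs_pos.mpr hv
    have h2 : |u i - v i| ≤ 0 := by
      have := (div_le_iff₀ hvpos).mp hi
      simpa using this
    have : u i - v i = 0 := abs_eq_zero.mp (le_antisymm h2 (abs_nonneg _))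
    linarith

lemma cwDist_entry_le {ι : Type*} {u v : ι → ℝ} {δ : ℝ} (hδ : 0 ≤ δ)
    (h : cwDist u v ≤ ENNReal.ofReal δ) (i : ι) : |u i - v i| ≤ δ * |v i| := by
  have hi := le_trans (cwDist_le_apply u v i) h
  by_cases hv : v i = 0
  · by_cases he : u i = v i
    · simp [he, hv]
    · rw [if_neg (by simpa using hv), if_neg he] at hi
      exact absurd (top_le_iff.mp hi) ENNReal.ofReal_ne_top
  · rw [if_pos hv] at hi
    have hvpos : 0 < |v i| := abs_pos.mpr hv
    have := (ENNReal.ofReal_le_ofReal_iff hδ).mp hi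
    calc |u i - v i| = (|u i - v i| / |v i|) * |v i| := by field_simp
    _ ≤ δ * |v i| := by apply mul_le_mul_of_nonneg_right this (abs_nonneg _)

lemma key_real (s fx fa gx ga η : ℝ) (hs : |s| = 1) (hfa : fa ≠ 0) (hga : ga ≠ 0)
    (hη0 : 0 ≤ η) (hη : η ≤ 1/2) (hβ : |fx - fa| ≤ η * |fa|) :
    |s * gx / fx - s * ga / fa| / |s * ga / fa| ≤
      (1 + 2 * η) * (|gx - ga| / |ga| + |fx - fa| / |fa|) := by
  have hfap : 0 < |fa| := abs_pos.mpr hfa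
  have hgap : 0 < |ga| := abs_pos.mpr hga
  have hfx1 : (1 - η) * |fa| ≤ |fx| := by
    have h1 : |fa| - |fx| ≤ |fa - fx| := abs_sub_abs_le_abs_sub fa fx
    rw [abs_sub_comm] at h1
    nlinarith
  have hfxp : 0 < |fx| := by nlinarith
  have hfx : fx ≠ 0 := abs_pos.mp hfxp
  have h1 : s * gx / fx - s * ga / fa = s * (gx * fa - ga * fx) / (fx * fa) := by
    field_simp
  have h2 : |s * gx / fx - s * ga / fa| = |gx * fa - ga * fx| / (|fx| * |fa|) := by
    rw [h1, abs_div, abs_mul, hs, one_mul, abs_mul]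
  have h3 : |s * ga / fa| = |ga| / |fa| := by
    rw [abs_div, abs_mul, hs, one_mul]
  rw [h2, h3]
  have h4 : |gx * fa - ga * fx| / (|fx| * |fa|) / (|ga| / |fa|)
      = |gx * fa - ga * fx| / (|fx| * |ga|) := by
    field_simp
  rw [h4]
  have h5 : |gx * fa - ga * fx| ≤ |gx - ga| * |fa| + |ga| * |fx - fa| := by
    calc |gx * fa - ga * fx| = |(gx - ga) * fa - ga * (fx - fa)| := by ring_nf
    _ ≤ |(gx - ga) * fa| + |ga * (fx - fa)| := abs_sub _ _
    _ = |gx - ga| * |fa| + |ga| * |fx - fa| := by rw [abs_mul, abs_mul]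
  rw [div_le_iff₀ (by positivity)]
  have key : (1 + 2*η) * (1 - η) ≥ 1 := by nlinarith
  have hRHS : (1 + 2 * η) * (|gx - ga| / |ga| + |fx - fa| / |fa|) * (|fx| * |ga|)
      = (1 + 2*η) * (|gx - ga| * |fa| + |ga| * |fx - fa|) * (|fx| / |fa|) := by
    field_simp
  rw [hRHS]
  have h6 : (1:ℝ) ≤ (1 + 2*η) * (|fx| / |fa|) := by
    rw [ge_iff_le] at key
    calc (1:ℝ) ≤ (1 + 2*η) * (1-η) := key
    _ ≤ (1 + 2*η) * (|fx| / |fa|) := by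
        apply mul_le_mul_of_nonneg_left _ (by linarith)
        rw [le_div_iff₀ hfap]; nlinarith
  calc |gx * fa - ga * fx| ≤ |gx - ga| * |fa| + |ga| * |fx - fa| := h5
  _ = (|gx - ga| * |fa| + |ga| * |fx - fa|) * 1 := by ring
  _ ≤ (|gx - ga| * |fa| + |ga| * |fx - fa|) * ((1 + 2*η) * (|fx| / |fa|)) := by
      apply mul_le_mul_of_nonneg_left h6 (by positivity)
  _ = (1 + 2*η) * (|gx - ga| * |fa| + |ga| * |fx - fa|) * (|fx| / |fa|) := by ring

lemma enn_numeric {cA cS : ℝ≥0∞} (hA : cA ≠ ⊤) (hS : cS ≠ ⊤) {ε : ℝ} (hε : 0 < ε) :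
    ENNReal.ofReal (1 + 2 * (ε / (8 * ((cA + cS).toReal + ε)))) *
      ((cS + ENNReal.ofReal (ε/4)) + (cA + ENNReal.ofReal (ε/4)))
      ≤ cA + cS + ENNReal.ofReal ε := by
  set m : ℝ := (cA + cS).toReal with hm
  have hm0 : 0 ≤ m := ENNReal.toReal_nonneg
  set η : ℝ := ε / (8 * (m + ε)) with hηdef
  have hη0 : 0 ≤ η := by positivity
  have hMt : cA + cS ≠ ⊤ := by finiteness
  have hX : ENNReal.ofReal (1 + 2*η) *
      ((cS + ENNReal.ofReal (ε/4)) + (cA + ENNReal.ofReal (ε/4))) ≠ ⊤ := by finiteness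
  have hY : cA + cS + ENNReal.ofReal ε ≠ ⊤ := by finiteness
  rw [← ENNReal.toReal_le_toReal hX hY]
  rw [ENNReal.toReal_mul, ENNReal.toReal_add hMt ENNReal.ofReal_ne_top,
      ENNReal.toReal_add (by finiteness) (by finiteness),
      ENNReal.toReal_add hS ENNReal.ofReal_ne_top,
      ENNReal.toReal_add hA ENNReal.ofReal_ne_top,
      ENNReal.toReal_ofReal (by positivity),
      ENNReal.toReal_ofReal (by positivity),
      ENNReal.toReal_ofReal hε.le]
  have hsum : cS.toReal + cA.toReal = m := by
    rw [hm, ENNReal.toReal_add hA hS]; ring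
  have hη1 : η * (m + ε) = ε/8 := by
    rw [hηdef]; field_simp
  nlinarith [ENNReal.toReal_nonneg (a := cA), ENNReal.toReal_nonneg (a := cS)]

lemma inv_apply_eq {m : ℕ} (M : Matrix (Fin (m+1)) (Fin (m+1)) ℝ) (k l : Fin (m+1)) :
    M⁻¹ k l = ((-1:ℝ)^((l:ℕ)+(k:ℕ)) * (M.submatrix l.succAbove k.succAbove).det) / M.det := by
  rw [Matrix.inv_def, Matrix.smul_apply, Matrix.adjugate_fin_succ_eq_det_submatrix,
      Ring.inverse_eq_inv, smul_eq_mul]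
  ring

end Aux

lemma enn_numeric' {cA cS : ℝ≥0∞} (hA : cA ≠ ⊤) (hS : cS ≠ ⊤) {ε η : ℝ} (hε : 0 < ε)
    (hη : η = ε / (8 * ((cA + cS).toReal + ε))) :
    ENNReal.ofReal (1 + 2 * η) *
      ((cS + ENNReal.ofReal (ε/4)) + (cA + ENNReal.ofReal (ε/4)))
      ≤ cA + cS + ENNReal.ofReal ε := by
  subst hη; exact enn_numeric hA hS hε

set_option maxHeartbeats 1600000 in
/-- For an invertible `(n+1)×(n+1)` real matrix `A` and indices `k, l`,
`c†_{kl}(A) ≤ c^det(A) + c^det(A_{lk})`, where `A_{lk}` is obtained from `A` by deleting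
the `l`-th row and the `k`-th column. -/
theorem cInv_le_cDet_add_cDet {n : ℕ} (A : Matrix (Fin (n + 1)) (Fin (n + 1)) ℝ)
    (hA : IsUnit A.det) (k l : Fin (n + 1)) :
    cInv k l A ≤ cDet A + cDet (A.submatrix l.succAbove k.succAbove) := by
  classical
  set sA : Matrix (Fin n) (Fin n) ℝ := A.submatrix l.succAbove k.succAbove with hsA
  have hfa : A.det ≠ 0 := hA.ne_zero
  have hFM : funToMat (matToFun A) = A := rfl
  set s : ℝ := (-1 : ℝ)^((l:ℕ)+(k:ℕ)) with hsdef
  have hs : |s| = 1 := by rw [hsdef, abs_pow, abs_neg, abs_one, one_pow]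
  have hs0 : s ≠ 0 := by rw [hsdef]; exact pow_ne_zero _ (by norm_num)
  have hinv : ∀ M : Matrix (Fin (n+1)) (Fin (n+1)) ℝ,
      M⁻¹ k l = (s * (M.submatrix l.succAbove k.succAbove).det) / M.det := by
    intro M; rw [hsdef]; exact inv_apply_eq M k l
  by_cases hg0 : sA.det = 0
  · -- degenerate case: the (l,k) cofactor of `A` vanishes
    refine le_trans ?_ le_add_self
    have hFa0 : (funToMat (matToFun A))⁻¹ k l = 0 := by
      rw [hFM, hinv A, ← hsA, hg0, mul_zero, zero_div]
    simp only [cInv, cDet, cwCond]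
    refine iInf_mono fun δ => iInf_mono fun _ => ?_
    refine iSup₂_le fun x hx => ?_
    obtain ⟨hxU, hxd, hxne⟩ := hx
    by_cases hdt : cwDist x (matToFun A) = ⊤
    · rw [hdt, ENNReal.div_top]; exact zero_le
    · by_cases hgx : ((funToMat x).submatrix l.succAbove k.succAbove).det = 0
      · have hx0 : (funToMat x)⁻¹ k l = 0 := by rw [hinv, hgx, mul_zero, zero_div]
        simp only [hx0, hFa0, cwDist_single]
        simp
      · -- the sup on the right is infinite
        set y : Fin n × Fin n → ℝ := fun p => x (l.succAbove p.1, k.succAbove p.2) with hy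
        have hyle : cwDist y (matToFun sA) ≤ cwDist x (matToFun A) :=
          cwDist_comp_le (fun p : Fin n × Fin n => (l.succAbove p.1, k.succAbove p.2))
            x (matToFun A)
        have hyd : cwDist y (matToFun sA) ≤ δ := hyle.trans hxd
        have hydt : cwDist y (matToFun sA) ≠ ⊤ := fun h => hdt (top_le_iff.mp (h ▸ hyle))
        have hfy : funToMat y = (funToMat x).submatrix l.succAbove k.succAbove := rfl
        have hyne : y ≠ matToFun sA := by
          intro h
          apply hgx
          rw [← hfy, h]
          exact hg0
        refine le_trans le_top (le_iSup₂_of_le y ⟨Set.mem_univ y, hyd, hyne⟩ ?_)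
        have hnum : cwDist (fun _ : Unit => (funToMat y).det)
            (fun _ : Unit => (funToMat (matToFun sA)).det) = ⊤ := by
          rw [cwDist_single, show (funToMat (matToFun sA)).det = sA.det from rfl, hg0, hfy]
          simp [hgx]
        beta_reduce
        rw [hnum, ENNReal.top_div_of_ne_top hydt]
  · -- main case: the cofactor is nonvanishing
    refine ENNReal.le_of_forall_pos_le_add fun ε hε hM => ?_
    have hεr : (0:ℝ) < (ε:ℝ) := by exact_mod_cast hε
    have hMA : cDet A ≠ ⊤ := (lt_of_le_of_lt le_self_add hM).ne
    have hMS : cDet sA ≠ ⊤ := (lt_of_le_of_lt le_add_self hM).ne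
    set m : ℝ := (cDet A + cDet sA).toReal with hm
    have hm0 : 0 ≤ m := ENNReal.toReal_nonneg
    set η : ℝ := (ε:ℝ) / (8 * (m + (ε:ℝ))) with hηdef
    have hη0 : 0 < η := by positivity
    have hηhalf : η ≤ 1/2 := by
      rw [hηdef, div_le_iff₀ (by positivity)]
      nlinarith
    have hε4 : ENNReal.ofReal ((ε:ℝ)/4) ≠ 0 := by
      simp only [ne_eq, ENNReal.ofReal_eq_zero, not_le]
      linarith
    -- choose δ₁ for cDet A
    have h1 : cDet A < cDet A + ENNReal.ofReal ((ε:ℝ)/4) := ENNReal.lt_add_right hMA hε4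
    rw [cDet, cwCond, iInf_lt_iff] at h1
    obtain ⟨δ₁, h1⟩ := h1
    rw [iInf_lt_iff] at h1
    obtain ⟨hδ₁0, hδ₁⟩ := h1
    -- choose δ₂ for cDet sA
    have h2 : cDet sA < cDet sA + ENNReal.ofReal ((ε:ℝ)/4) := ENNReal.lt_add_right hMS hε4
    rw [cDet, cwCond, iInf_lt_iff] at h2
    obtain ⟨δ₂, h2⟩ := h2
    rw [iInf_lt_iff] at h2
    obtain ⟨hδ₂0, hδ₂⟩ := h2
    -- continuity of the determinant
    have hcont : ContinuousAt (fun x : Fin (n+1) × Fin (n+1) → ℝ => (funToMat x).det)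
        (matToFun A) := by
      apply Continuous.continuousAt
      exact Continuous.matrix_det
        (continuous_pi fun i => continuous_pi fun j => continuous_apply (i, j))
    rw [Metric.continuousAt_iff] at hcont
    obtain ⟨δr, hδrpos, hδr⟩ := hcont (η * |A.det|) (by positivity)
    set C : ℝ := ‖matToFun A‖ with hC
    have hC0 : 0 ≤ C := norm_nonneg _
    set δ₃ : ℝ := δr / (2 * (C + 1)) with hδ₃def
    have hδ₃pos : 0 < δ₃ := by positivity
    have hdet_close : ∀ x : Fin (n+1) × Fin (n+1) → ℝ,
        cwDist x (matToFun A) ≤ ENNReal.ofReal δ₃ →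
        |(funToMat x).det - A.det| ≤ η * |A.det| := by
      intro x hx
      have hentry := cwDist_entry_le hδ₃pos.le hx
      have hdist : dist x (matToFun A) < δr := by
        have hle : dist x (matToFun A) ≤ δ₃ * C := by
          rw [dist_pi_le_iff (by positivity)]
          intro p
          rw [Real.dist_eq]
          calc |x p - matToFun A p| ≤ δ₃ * |matToFun A p| := hentry p
          _ ≤ δ₃ * C := by
              apply mul_le_mul_of_nonneg_left _ hδ₃pos.le
              have := norm_le_pi_norm (matToFun A) p
              simpa [Real.norm_eq_abs] using this
        calc dist x (matToFun A) ≤ δ₃ * C := hle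
        _ < δr := by
            rw [hδ₃def, div_mul_eq_mul_div, div_lt_iff₀ (by positivity)]
            nlinarith
      have := hδr hdist
      rw [Real.dist_eq] at this
      exact le_of_lt (by simpa [hFM] using this)
    set δ₀ : ℝ≥0∞ := min δ₁ (min δ₂ (ENNReal.ofReal δ₃)) with hδ₀def
    have hδ₀pos : δ₀ ∈ Set.Ioi (0:ℝ≥0∞) := by
      refine lt_min hδ₁0 (lt_min (show 0 < δ₂ from hδ₂0) ?_)
      simpa [ENNReal.ofReal_pos] using hδ₃pos
    simp only [cInv, cwCond]
    refine le_trans (iInf₂_le δ₀ hδ₀pos) (iSup₂_le fun x hx => ?_)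
    obtain ⟨hxU, hxd, hxne⟩ := hx
    have hdne : cwDist x (matToFun A) ≠ 0 := fun h => hxne (cwDist_eq_zero h)
    have hdle3 : cwDist x (matToFun A) ≤ ENNReal.ofReal δ₃ :=
      hxd.trans ((min_le_right _ _).trans (min_le_right _ _))
    have hfx : (funToMat x).det ≠ 0 := isUnit_iff_ne_zero.mp hxU
    have hβc : |(funToMat x).det - A.det| ≤ η * |A.det| := hdet_close x hdle3
    have hkey := key_real s (funToMat x).det A.det
      ((funToMat x).submatrix l.succAbove k.succAbove).det sA.det η hs hfa hg0 hη0.le hηhalf hβc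
    have hnum : cwDist (fun _ : Unit => (funToMat x)⁻¹ k l)
        (fun _ : Unit => (funToMat (matToFun A))⁻¹ k l)
        = ENNReal.ofReal (|s * ((funToMat x).submatrix l.succAbove k.succAbove).det /
            (funToMat x).det - s * sA.det / A.det| / |s * sA.det / A.det|) := by
      rw [cwDist_single, hFM, hinv A, ← hsA, hinv (funToMat x),
        if_pos (show s * sA.det / A.det ≠ 0 from div_ne_zero (mul_ne_zero hs0 hg0) hfa)]
    have hnumA : cwDist (fun _ : Unit => (funToMat x).det)
        (fun _ : Unit => (funToMat (matToFun A)).det)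
        = ENNReal.ofReal (|(funToMat x).det - A.det| / |A.det|) := by
      rw [cwDist_single, hFM, if_pos (show A.det ≠ 0 from hfa)]
    have hβbound : ENNReal.ofReal (|(funToMat x).det - A.det| / |A.det|) /
        cwDist x (matToFun A) ≤ cDet A + ENNReal.ofReal ((ε:ℝ)/4) := by
      refine le_trans ?_ hδ₁.le
      refine le_iSup₂_of_le x ⟨Set.mem_univ x, hxd.trans (min_le_left _ _), hxne⟩ ?_
      refine le_of_eq ?_
      beta_reduce
      rw [hnumA]
    set y : Fin n × Fin n → ℝ := fun p => x (l.succAbove p.1, k.succAbove p.2) with hy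
    have hnumS : cwDist (fun _ : Unit => (funToMat y).det)
        (fun _ : Unit => (funToMat (matToFun sA)).det)
        = ENNReal.ofReal (|((funToMat x).submatrix l.succAbove k.succAbove).det - sA.det| /
            |sA.det|) := by
      rw [cwDist_single, show (funToMat (matToFun sA)).det = sA.det from rfl,
        show (funToMat y).det = ((funToMat x).submatrix l.succAbove k.succAbove).det from rfl,
        if_pos (show sA.det ≠ 0 from hg0)]
    have hαbound : ENNReal.ofReal
        (|((funToMat x).submatrix l.succAbove k.succAbove).det - sA.det| / |sA.det|) /
        cwDist x (matToFun A) ≤ cDet sA + ENNReal.ofReal ((ε:ℝ)/4) := by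
      by_cases hry : y = matToFun sA
      · have hdet : ((funToMat x).submatrix l.succAbove k.succAbove).det = sA.det := by
          rw [show (funToMat x).submatrix l.succAbove k.succAbove = funToMat y from rfl, hry]
          exact rfl
        rw [hdet]
        simp
      · have hyle : cwDist y (matToFun sA) ≤ cwDist x (matToFun A) :=
          cwDist_comp_le (fun p : Fin n × Fin n => (l.succAbove p.1, k.succAbove p.2))
            x (matToFun A)
        refine le_trans (ENNReal.div_le_div_left hyle _) ?_
        refine le_trans ?_ hδ₂.le
        refine le_iSup₂_of_le y
          ⟨Set.mem_univ y,
            hyle.trans (hxd.trans ((min_le_right _ _).trans (min_le_left _ _))), hry⟩ ?_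
        refine le_of_eq ?_
        beta_reduce
        rw [hnumS]
    calc cwDist (fun _ : Unit => (funToMat x)⁻¹ k l)
          (fun _ : Unit => (funToMat (matToFun A))⁻¹ k l) / cwDist x (matToFun A)
        = ENNReal.ofReal (|s * ((funToMat x).submatrix l.succAbove k.succAbove).det /
            (funToMat x).det - s * sA.det / A.det| / |s * sA.det / A.det|) /
            cwDist x (matToFun A) := by rw [hnum]
      _ ≤ ENNReal.ofReal ((1 + 2*η) *
            (|((funToMat x).submatrix l.succAbove k.succAbove).det - sA.det| / |sA.det| +
              |(funToMat x).det - A.det| / |A.det|)) / cwDist x (matToFun A) :=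
          ENNReal.div_le_div_right (ENNReal.ofReal_le_ofReal hkey) _
      _ = (ENNReal.ofReal (1 + 2*η) *
            (ENNReal.ofReal
              (|((funToMat x).submatrix l.succAbove k.succAbove).det - sA.det| / |sA.det|) +
             ENNReal.ofReal (|(funToMat x).det - A.det| / |A.det|))) /
            cwDist x (matToFun A) := by
          rw [ENNReal.ofReal_mul (by positivity),
            ENNReal.ofReal_add
              (p := |((funToMat x).submatrix l.succAbove k.succAbove).det - sA.det| / |sA.det|)
              (q := |(funToMat x).det - A.det| / |A.det|) (by positivity) (by positivity)]
      _ = ENNReal.ofReal (1 + 2*η) *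
            (ENNReal.ofReal
              (|((funToMat x).submatrix l.succAbove k.succAbove).det - sA.det| / |sA.det|) /
              cwDist x (matToFun A) +
             ENNReal.ofReal (|(funToMat x).det - A.det| / |A.det|) /
              cwDist x (matToFun A)) := by
          rw [mul_div_assoc, ENNReal.add_div]
      _ ≤ ENNReal.ofReal (1 + 2*η) *
            ((cDet sA + ENNReal.ofReal ((ε:ℝ)/4)) + (cDet A + ENNReal.ofReal ((ε:ℝ)/4))) :=
          mul_le_mul_right (add_le_add hαbound hβbound) _
      _ ≤ cDet A + cDet sA + ENNReal.ofReal (ε:ℝ) :=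
          enn_numeric' hMA hMS hεr (by rw [hηdef, hm])
      _ = cDet A + cDet sA + ↑ε := by rw [ENNReal.ofReal_coe_nnreal]
end

section
/- Let A be an invertible n×n real matrix, b ∈ ℝⁿ, and k ∈ [n]. Then the componentwise condition number c_k(A,b) of the map (A,b) ↦ (A⁻¹b)_k at (A,b) satisfies c_k(A,b) ≤ c^det(A) + c^det(R_k), where R_k is the matrix obtained by replacing the k-th column of A by b. -/
open MeasureTheory ProbabilityTheory
open scoped ENNReal

lemma cwDist_eq_zero_iff {ι : Type*} {u v : ι → ℝ} : cwDist u v = 0 ↔ u = v := by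
  rw [cwDist, ENNReal.iSup_eq_zero]
  constructor
  · intro h
    funext i
    have := h i
    split_ifs at this with h1 h2
    · have : |u i - v i| / |v i| ≤ 0 := by
        simpa [ENNReal.ofReal_eq_zero] using this
      have hpos : 0 < |v i| := abs_pos.mpr h1
      have : |u i - v i| ≤ 0 := by
        rw [div_le_iff₀ hpos] at this; simpa using this
      have : u i - v i = 0 := by
        have := abs_nonneg (u i - v i); nlinarith [abs_nonneg (u i - v i), le_abs_self (u i - v i), neg_abs_le (u i - v i)]
      linarith
    · exact h2
    · simp at this
  · rintro rfl i
    split_ifs with h1 h2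
    · simp
    · rfl
    · simp at h2

lemma cwDist_unit (t s : ℝ) (hs : s ≠ 0) :
    cwDist (fun _ : Unit => t) (fun _ : Unit => s) = ENNReal.ofReal (|t - s| / |s|) := by
  rw [cwDist, iSup_unique]
  simp [hs]

lemma cwDist_le_of_embed {ι ι' : Type*} (u v : ι → ℝ) (u' v' : ι' → ℝ) (g : ι → ι')
    (hu : ∀ i, u i = u' (g i)) (hv : ∀ i, v i = v' (g i)) : cwDist u v ≤ cwDist u' v' := by
  refine iSup_le fun i => ?_
  rw [hu i, hv i]
  exact le_iSup (fun j => if v' j ≠ 0 then ENNReal.ofReal (|u' j - v' j| / |v' j|)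
       else if u' j = v' j then 0 else ⊤) (g i)

noncomputable def iSupBall {ι κ : Type*} (D : Set (ι → ℝ)) (F : (ι → ℝ) → κ → ℝ)
    (a : ι → ℝ) (δ : ℝ≥0∞) : ℝ≥0∞ :=
  ⨆ x ∈ {x ∈ D | cwDist x a ≤ δ ∧ x ≠ a}, cwDist (F x) (F a) / cwDist x a

lemma cwCond_eq {ι κ : Type*} (D : Set (ι → ℝ)) (F : (ι → ℝ) → κ → ℝ) (a : ι → ℝ) :
    cwCond D F a = ⨅ δ ∈ Set.Ioi (0 : ℝ≥0∞), iSupBall D F a δ := rfl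

lemma cwCond_le_iSupBall {ι κ : Type*} {D : Set (ι → ℝ)} {F : (ι → ℝ) → κ → ℝ}
    {a : ι → ℝ} {δ : ℝ≥0∞} (hδ : 0 < δ) : cwCond D F a ≤ iSupBall D F a δ := by
  rw [cwCond_eq]
  exact biInf_le _ hδ

lemma le_iSupBall {ι κ : Type*} {D : Set (ι → ℝ)} {F : (ι → ℝ) → κ → ℝ}
    {a : ι → ℝ} {δ : ℝ≥0∞} {x : ι → ℝ} (hx : x ∈ D) (hd : cwDist x a ≤ δ) (hne : x ≠ a) :
    cwDist (F x) (F a) / cwDist x a ≤ iSupBall D F a δ :=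
  le_biSup (fun y => cwDist (F y) (F a) / cwDist y a) (i := x) (by exact ⟨hx, hd, hne⟩)

lemma iSupBall_mono {ι κ : Type*} {D : Set (ι → ℝ)} {F : (ι → ℝ) → κ → ℝ}
    {a : ι → ℝ} {δ δ' : ℝ≥0∞} (h : δ ≤ δ') : iSupBall D F a δ ≤ iSupBall D F a δ' := by
  refine iSup_le fun x => iSup_le fun hx => le_iSupBall hx.1 (hx.2.1.trans h) hx.2.2

lemma exists_iSupBall_le {ι κ : Type*} {D : Set (ι → ℝ)} {F : (ι → ℝ) → κ → ℝ}
    {a : ι → ℝ} (h : cwCond D F a ≠ ⊤) {η : ℝ≥0∞} (hη : 0 < η) :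
    ∃ δ : ℝ≥0∞, 0 < δ ∧ δ ≠ ⊤ ∧ iSupBall D F a δ ≤ cwCond D F a + η := by
  have hlt : cwCond D F a < cwCond D F a + η := ENNReal.lt_add_right h hη.ne'
  rw [cwCond_eq] at hlt
  obtain ⟨δ, hδ, hle⟩ : ∃ δ ∈ Set.Ioi (0 : ℝ≥0∞), iSupBall D F a δ < cwCond D F a + η := by
    rw [iInf_lt_iff] at hlt
    obtain ⟨δ, hlt⟩ := hlt
    rw [iInf_lt_iff] at hlt
    obtain ⟨hδ, hlt⟩ := hlt
    exact ⟨δ, hδ, hlt⟩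
  refine ⟨min δ 1, lt_min hδ one_pos, ?_, ?_⟩
  · exact ne_top_of_le_ne_top ENNReal.one_ne_top (min_le_right _ _)
  · exact ((iSupBall_mono (min_le_left _ _)).trans hle.le)

lemma key_real_s12 {s t u v θ : ℝ} (hs : s ≠ 0) (hu : u ≠ 0) (hθ : θ < 1) (ht : (1-θ)*|s| ≤ |t|) :
    |v/t - u/s| / |u/s| ≤ (|v-u|/|u| + |t-s|/|s|) / (1-θ) := by
  have hs' : 0 < |s| := abs_pos.mpr hs
  have hu' : 0 < |u| := abs_pos.mpr hu
  have h1θ : 0 < 1 - θ := by linarith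
  have ht' : 0 < |t| := lt_of_lt_of_le (by positivity) ht
  have htne : t ≠ 0 := abs_pos.mp ht'
  have eq0 : v/t - u/s = (v*s - u*t)/(t*s) := by field_simp
  have e1 : |v/t - u/s| = |v*s - u*t| / (|t| * |s|) := by
    rw [eq0, abs_div, abs_mul]
  have e2 : |v/t - u/s| / |u/s| = |v*s - u*t| / (|t| * |u|) := by
    rw [e1, abs_div]
    field_simp
  have e3 : |v*s - u*t| ≤ |v - u| * |s| + |u| * |t - s| := by
    calc |v*s - u*t| = |(v-u)*s + -(u*(t-s))| := by congr 1; ring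
    _ ≤ |(v-u)*s| + |-(u*(t-s))| := abs_add_le _ _
    _ = |v - u| * |s| + |u| * |t - s| := by rw [abs_neg, abs_mul, abs_mul]
  rw [e2]
  have e4 : (|v-u|/|u| + |t-s|/|s|) / (1-θ) = (|v - u| * |s| + |u| * |t - s|) / (|u| * |s| * (1-θ)) := by
    field_simp
  rw [e4]
  apply div_le_div₀ (by positivity) e3 (by positivity)
  nlinarith

lemma inv_mulVec_eq {n : ℕ} (X : Matrix (Fin n) (Fin n) ℝ) (c : Fin n → ℝ)
    (h : IsUnit X.det) (k : Fin n) :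
    Matrix.mulVec X⁻¹ c k = (X.updateCol k c).det / X.det := by
  have hthis := congrFun (Matrix.det_smul_inv_mulVec_eq_cramer X c h) k
  rw [Matrix.cramer_apply] at hthis
  have hd : X.det ≠ 0 := h.ne_zero
  rw [eq_div_iff hd, mul_comm]
  simpa using hthis


lemma det_dist_bound {n : ℕ} {B C : Matrix (Fin n) (Fin n) ℝ} {δ L d' : ℝ≥0∞}
    (hd : cwDist (matToFun C) (matToFun B) ≤ d') (hd' : d' ≤ δ) (hdt : d' ≠ ⊤)
    (hball : iSupBall Set.univ (fun x (_ : Unit) => (funToMat x).det) (matToFun B) δ ≤ L) :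
    cwDist (fun _ : Unit => C.det) (fun _ : Unit => B.det) ≤ L * d' := by
  by_cases hCB : matToFun C = matToFun B
  · have hCB' : C = B := by funext i j; exact congrFun hCB (i, j)
    rw [hCB', show cwDist (fun _ : Unit => B.det) (fun _ : Unit => B.det) = 0 from
      cwDist_eq_zero_iff.mpr rfl]
    exact zero_le
  · have h0 : cwDist (matToFun C) (matToFun B) ≠ 0 := fun h => hCB (cwDist_eq_zero_iff.mp h)
    have hT : cwDist (matToFun C) (matToFun B) ≠ ⊤ := ne_top_of_le_ne_top hdt hd
    have h1 := (le_iSupBall (F := fun x (_ : Unit) => (funToMat x).det)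
      (Set.mem_univ (matToFun C)) (hd.trans hd') hCB).trans hball
    rw [ENNReal.div_le_iff h0 hT] at h1
    have h2 : cwDist (fun _ : Unit => C.det) (fun _ : Unit => B.det)
        ≤ L * cwDist (matToFun C) (matToFun B) := h1
    exact h2.trans (mul_le_mul_right hd L)

/-- For an invertible `n×n` real matrix `A`, `b ∈ ℝⁿ` and `k ∈ [n]`,
`c_k(A,b) ≤ c^det(A) + c^det(R_k)`, where `R_k` is obtained from `A` by replacing its
`k`-th column by `b`. -/
theorem cLin_le_cDet_add_cDet {n : ℕ} (A : Matrix (Fin n) (Fin n) ℝ)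
    (hA : IsUnit A.det) (b : Fin n → ℝ) (k : Fin n) :
    cLin k A b ≤ cDet A + cDet (A.updateCol k b) := by
  by_cases hAtop : cDet A = ⊤
  · simp [hAtop]
  by_cases hRtop : cDet (A.updateCol k b) = ⊤
  · simp [hRtop]
  set R := A.updateCol k b with hRdef
  set M := cDet A + cDet R with hMdef
  have hM : M ≠ ⊤ := by
    rw [hMdef]
    exact ENNReal.add_ne_top.mpr ⟨hAtop, hRtop⟩
  have hs : A.det ≠ 0 := hA.ne_zero
  -- Step A: the main estimate for fixed η and θ
  have stepA : ∀ η : ℝ≥0∞, 0 < η → η ≠ ⊤ → ∀ θ : ℝ, 0 < θ → θ < 1 →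
      cLin k A b ≤ (M + η + η) * ENNReal.ofReal (1 - θ)⁻¹ := by
    intro η hη hηt θ hθ0 hθ1
    obtain ⟨δa, hδa0, hδat, hδa⟩ := exists_iSupBall_le (F := fun x (_ : Unit) => (funToMat x).det)
      (a := matToFun A) hAtop hη
    obtain ⟨δr, hδr0, hδrt, hδr⟩ := exists_iSupBall_le (F := fun x (_ : Unit) => (funToMat x).det)
      (a := matToFun R) hRtop hη
    have hK0 : cDet A + η ≠ 0 := (lt_of_lt_of_le hη le_add_self).ne'
    have hKt : cDet A + η ≠ ⊤ := ENNReal.add_ne_top.mpr ⟨hAtop, hηt⟩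
    set δ := min δa (min δr (ENNReal.ofReal θ / (cDet A + η))) with hδdef
    have hδ0 : 0 < δ := by
      refine lt_min hδa0 (lt_min hδr0 ?_)
      exact ENNReal.div_pos (ENNReal.ofReal_pos.mpr hθ0).ne' hKt
    have hδt : δ ≠ ⊤ := ne_top_of_le_ne_top hδat (min_le_left _ _)
    have hδa' : δ ≤ δa := min_le_left _ _
    have hδr' : δ ≤ δr := (min_le_right _ _).trans (min_le_left _ _)
    have hKδ : (cDet A + η) * δ ≤ ENNReal.ofReal θ :=
      (mul_le_mul_right ((min_le_right _ _).trans (min_le_right _ _)) _).trans ENNReal.mul_div_le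
    refine le_trans (cwCond_le_iSupBall (D := {x | IsUnit (funToMat' x).det})
      (F := fun x (_ : Unit) => Matrix.mulVec (funToMat' x)⁻¹ (funToVec x) k)
      (a := pairToFun A b) hδ0) ?_
    rw [iSupBall]
    refine iSup₂_le fun x hx => ?_
    obtain ⟨hxD, hxd, hxne⟩ := hx
    have hdx0 : cwDist x (pairToFun A b) ≠ 0 := fun h => hxne (cwDist_eq_zero_iff.mp h)
    have hdxt : cwDist x (pairToFun A b) ≠ ⊤ := ne_top_of_le_ne_top hδt hxd
    have htu : IsUnit (funToMat' x).det := hxD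
    have htne : (funToMat' x).det ≠ 0 := htu.ne_zero
    -- component distances
    have hXA : cwDist (matToFun (funToMat' x)) (matToFun A) ≤ cwDist x (pairToFun A b) := by
      refine cwDist_le_of_embed _ _ _ _ (fun p : Fin n × Fin n => Sum.inl p) ?_ ?_ <;>
        intro p <;> rfl
    have hRR : cwDist (matToFun ((funToMat' x).updateCol k (funToVec x))) (matToFun R)
        ≤ cwDist x (pairToFun A b) := by
      refine cwDist_le_of_embed _ _ _ _
        (fun p : Fin n × Fin n => if p.2 = k then Sum.inr p.1 else Sum.inl p) ?_ ?_ <;>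
        intro p <;> by_cases h : p.2 = k <;>
        simp [matToFun, hRdef, Matrix.updateCol_apply, h, funToVec, funToMat', pairToFun]
    -- determinant distance bounds
    have hbA : cwDist (fun _ : Unit => (funToMat' x).det) (fun _ : Unit => A.det)
        ≤ (cDet A + η) * cwDist x (pairToFun A b) :=
      det_dist_bound hXA (hxd.trans hδa') hdxt hδa
    have hbR : cwDist (fun _ : Unit => ((funToMat' x).updateCol k (funToVec x)).det)
        (fun _ : Unit => R.det) ≤ (cDet R + η) * cwDist x (pairToFun A b) :=
      det_dist_bound hRR (hxd.trans hδr') hdxt hδr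
    have hbAθ : cwDist (fun _ : Unit => (funToMat' x).det) (fun _ : Unit => A.det)
        ≤ ENNReal.ofReal θ :=
      le_trans (det_dist_bound (hXA.trans hxd) hδa' hδt hδa) hKδ
    have hts' : |(funToMat' x).det - A.det| / |A.det| ≤ θ := by
      rw [cwDist_unit _ _ hs] at hbAθ
      exact (ENNReal.ofReal_le_ofReal_iff hθ0.le).mp hbAθ
    have habs : (1 - θ) * |A.det| ≤ |(funToMat' x).det| := by
      have hsp : 0 < |A.det| := abs_pos.mpr hs
      have h1 : |(funToMat' x).det - A.det| ≤ θ * |A.det| := by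
        rw [div_le_iff₀ hsp] at hts'; linarith
      have h2 : |A.det| - |(funToMat' x).det| ≤ |A.det - (funToMat' x).det| :=
        abs_sub_abs_le_abs_sub _ _
      rw [abs_sub_comm] at h2
      linarith
    -- rewrite the solution components via Cramer's rule
    have hFx : (fun _ : Unit => Matrix.mulVec (funToMat' x)⁻¹ (funToVec x) k)
        = fun _ : Unit => ((funToMat' x).updateCol k (funToVec x)).det / (funToMat' x).det := by
      funext _; exact inv_mulVec_eq _ _ htu k
    have hFa : (fun _ : Unit =>
          Matrix.mulVec (funToMat' (pairToFun A b))⁻¹ (funToVec (pairToFun A b)) k)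
        = fun _ : Unit => R.det / A.det := by
      funext _
      show Matrix.mulVec A⁻¹ b k = R.det / A.det
      rw [hRdef]
      exact inv_mulVec_eq A b hA k
    rw [hFx, hFa]
    by_cases hu0 : R.det = 0
    · -- trivial case: solution component is zero and stays zero
      have hv0 : ((funToMat' x).updateCol k (funToVec x)).det = 0 := by
        by_contra hv
        have htop : cwDist (fun _ : Unit => ((funToMat' x).updateCol k (funToVec x)).det)
            (fun _ : Unit => R.det) = ⊤ := by
          rw [cwDist, iSup_unique]
          simp [hu0, hv]
        rw [htop] at hbR
        exact (ENNReal.mul_ne_top (ENNReal.add_ne_top.mpr ⟨hRtop, hηt⟩) hdxt)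
          (top_le_iff.mp hbR)
      have hzz : (fun _ : Unit => ((funToMat' x).updateCol k (funToVec x)).det / (funToMat' x).det)
          = fun _ : Unit => R.det / A.det := by
        funext _; rw [hv0, hu0, zero_div, zero_div]
      rw [hzz, show cwDist (fun _ : Unit => R.det / A.det) (fun _ : Unit => R.det / A.det) = 0
        from cwDist_eq_zero_iff.mpr rfl, ENNReal.zero_div]
      exact zero_le
    · -- main case
      have hFane : R.det / A.det ≠ 0 := div_ne_zero hu0 hs
      rw [cwDist_unit _ _ hFane]
      have hkey := key_real_s12 (v := ((funToMat' x).updateCol k (funToVec x)).det)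
        hs hu0 hθ1 habs
      have hdetRunit := cwDist_unit ((funToMat' x).updateCol k (funToVec x)).det R.det hu0
      have hdetAunit := cwDist_unit (funToMat' x).det A.det hs
      have step1 : ENNReal.ofReal
            (|((funToMat' x).updateCol k (funToVec x)).det / (funToMat' x).det - R.det / A.det|
              / |R.det / A.det|)
          ≤ (cwDist (fun _ : Unit => ((funToMat' x).updateCol k (funToVec x)).det)
                (fun _ : Unit => R.det)
              + cwDist (fun _ : Unit => (funToMat' x).det) (fun _ : Unit => A.det))
            * ENNReal.ofReal (1 - θ)⁻¹ := by
        rw [hdetRunit, hdetAunit, ← ENNReal.ofReal_add (by positivity) (by positivity),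
          ← ENNReal.ofReal_mul (by positivity)]
        apply ENNReal.ofReal_le_ofReal
        rw [div_eq_mul_inv] at hkey
        exact hkey
      rw [ENNReal.div_le_iff hdx0 hdxt]
      refine step1.trans ?_
      have h2 : cwDist (fun _ : Unit => ((funToMat' x).updateCol k (funToVec x)).det)
            (fun _ : Unit => R.det)
          + cwDist (fun _ : Unit => (funToMat' x).det) (fun _ : Unit => A.det)
          ≤ (M + η + η) * cwDist x (pairToFun A b) := by
        refine (add_le_add hbR hbA).trans ?_
        rw [← add_mul]
        exact mul_le_mul_left (le_of_eq (by rw [hMdef]; ring)) _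
      calc (cwDist (fun _ : Unit => ((funToMat' x).updateCol k (funToVec x)).det)
              (fun _ : Unit => R.det)
            + cwDist (fun _ : Unit => (funToMat' x).det) (fun _ : Unit => A.det))
            * ENNReal.ofReal (1 - θ)⁻¹
          ≤ ((M + η + η) * cwDist x (pairToFun A b)) * ENNReal.ofReal (1 - θ)⁻¹ :=
            mul_le_mul_left h2 _
        _ = (M + η + η) * ENNReal.ofReal (1 - θ)⁻¹ * cwDist x (pairToFun A b) := by ring
  -- Step C: remove η
  have stepC : ∀ θ : ℝ, 0 < θ → θ < 1 → cLin k A b * ENNReal.ofReal (1 - θ) ≤ M := by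
    intro θ hθ0 hθ1
    apply ENNReal.le_of_forall_pos_le_add
    intro ε hε _
    have hA2 := stepA (↑(ε / 2)) (ENNReal.coe_pos.mpr (half_pos hε)) ENNReal.coe_ne_top θ hθ0 hθ1
    have h1θ : (0 : ℝ) < 1 - θ := by linarith
    have h3 := mul_le_mul_left hA2 (ENNReal.ofReal (1 - θ))
    rw [mul_assoc, ← ENNReal.ofReal_mul (by positivity), inv_mul_cancel₀ h1θ.ne',
      ENNReal.ofReal_one, mul_one] at h3
    refine h3.trans ?_
    rw [add_assoc, ← ENNReal.coe_add, add_halves]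
  -- Step D: let θ → 0
  apply ENNReal.le_of_forall_pos_le_add
  intro ε hε _
  have hεr : (0 : ℝ) < (ε : ℝ) := hε
  have hMr0 : (0 : ℝ) ≤ M.toReal := ENNReal.toReal_nonneg
  set θ := (ε : ℝ) / (M.toReal + (ε : ℝ) + 1) with hθdef
  have hθ0 : 0 < θ := by positivity
  have hθ1 : θ < 1 := by
    rw [hθdef, div_lt_one (by positivity)]; linarith
  have hC := stepC θ hθ0 hθ1
  have h1θ : (0 : ℝ) < 1 - θ := by linarith
  have hne0 : ENNReal.ofReal (1 - θ) ≠ 0 := by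
    simp only [ne_eq, ENNReal.ofReal_eq_zero, not_le]; linarith
  have hC' : cLin k A b ≤ M / ENNReal.ofReal (1 - θ) :=
    (ENNReal.le_div_iff_mul_le (Or.inl hne0) (Or.inl ENNReal.ofReal_ne_top)).mpr hC
  refine hC'.trans ?_
  rw [ENNReal.div_le_iff hne0 ENNReal.ofReal_ne_top]
  have hMof : M = ENNReal.ofReal M.toReal := (ENNReal.ofReal_toReal hM).symm
  have hεof : (ε : ℝ≥0∞) = ENNReal.ofReal (ε : ℝ) := ENNReal.ofReal_coe_nnreal.symm
  calc M = ENNReal.ofReal M.toReal := hMof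
    _ ≤ ENNReal.ofReal ((M.toReal + (ε : ℝ)) * (1 - θ)) := by
        apply ENNReal.ofReal_le_ofReal
        have key : (M.toReal + (ε : ℝ)) * θ ≤ (ε : ℝ) := by
          have hd1 : (M.toReal + (ε : ℝ)) / (M.toReal + (ε : ℝ) + 1) ≤ 1 := by
            rw [div_le_one (by positivity)]; linarith
          calc (M.toReal + (ε : ℝ)) * θ
              = (ε : ℝ) * ((M.toReal + (ε : ℝ)) / (M.toReal + (ε : ℝ) + 1)) := by
                rw [hθdef]; ring
            _ ≤ (ε : ℝ) * 1 := mul_le_mul_of_nonneg_left hd1 hεr.le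
            _ = (ε : ℝ) := mul_one _
        nlinarith
    _ = (M + ↑ε) * ENNReal.ofReal (1 - θ) := by
        rw [ENNReal.ofReal_mul (by positivity : (0:ℝ) ≤ M.toReal + (ε : ℝ)),
          ENNReal.ofReal_add hMr0 ε.coe_nonneg, ← hMof, ← hεof]
end
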